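/- arXiv:2210.17489 — 6 statements merged into one kernel-verified Lean document; each statement's English description precedes it below -/
import Mathlib

section
/- For every connected graph G on a finite vertex set of even order, the square G^2 (where two vertices are adjacent iff they are at distance at most 2 in G) contains a perfect matching. -/
open SimpleGraph Finset

/-- The `k`-th power of a graph `G`: two vertices are adjacent iff they are distinct
and at distance at most `k` in `G`. -/
def gpow {V : Type*} (G : SimpleGraph V) (k : ℕ) : SimpleGraph V where
  Adj u v := u ≠ v ∧ G.dist u v ≤ k
  symm := ⟨fun u v h => ⟨h.1.symm, by rw [SimpleGraph.dist_comm]; exact h.2⟩⟩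
  loopless := ⟨fun u h => h.1 rfl⟩

/-- `H` contains a `K_r`-factor: a partition of the vertex set into parts of size `r`,
each inducing a clique in `H`. -/
def HasCliqueFactor {V : Type*} [Fintype V] [DecidableEq V] (H : SimpleGraph V) (r : ℕ) : Prop :=
  ∃ P : Finpartition (Finset.univ : Finset V),
    ∀ p ∈ P.parts, p.card = r ∧ H.IsClique (p : Set V)

/-- `A` is contained in a subtree of `G` of order at most `m`. -/
def InSubtree {V : Type*} (G : SimpleGraph V) (A : Set V) (m : ℕ) : Prop :=
  ∃ T : G.Subgraph, T.coe.IsTree ∧ A ⊆ T.verts ∧ T.verts.ncard ≤ m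

/-- `G` is `k`-connected: more than `k` vertices, and deleting any fewer than `k`
vertices leaves a connected graph. -/
def KConnected {V : Type*} (k : ℕ) (G : SimpleGraph V) : Prop :=
  k < Nat.card V ∧ ∀ S : Set V, S.ncard < k → (G.induce Sᶜ).Connected

/-!
Induction on the number of vertices, for preconnected graphs so that the empty graph is the base
case: it suffices to delete two vertices at distance at most `2` without disconnecting the rest.
Take `u` farthest from a root `r` and its parent `p` on a geodesic from `r`. Delete `u` together
with a second farthest neighbour of `p` if there is one, and with `p` itself otherwise; in both
cases no deleted vertex lies on a geodesic from `r` to a remaining vertex, so the rest stays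
preconnected, and a perfect matching of its square extends by the edge between the two.
-/

namespace SimpleGraph

variable {V W : Type*} {G : SimpleGraph V}

theorem Reachable.dist_map_le {G' : SimpleGraph W} (f : G →g G') {u v : V}
    (h : G.Reachable u v) : G'.dist (f u) (f v) ≤ G.dist u v := by
  obtain ⟨w, hw⟩ := h.exists_walk_length_eq_dist
  rw [← hw, ← w.length_map f]
  exact dist_le _

/-- Graph powers are defined through `dist`, which is `0` between unreachable vertices;
preconnectedness of the source rules out that junk value. -/
def Embedding.gpow {G' : SimpleGraph W} (f : G ↪g G') (hG : G.Preconnected) (k : ℕ) :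
    gpow G k →g gpow G' k where
  toFun := f
  map_rel' {u v} h := ⟨f.injective.ne h.1, ((hG u v).dist_map_le f.toHom).trans h.2⟩

theorem Walk.dist_add_dist_le_of_mem_support [DecidableEq V] {r x z : V} (p : G.Walk r x)
    (hp : p.length = G.dist r x) (hz : z ∈ p.support) :
    G.dist r z + G.dist z x ≤ G.dist r x := by
  have hsplit := congrArg Walk.length (p.take_spec hz)
  rw [Walk.length_append] at hsplit
  have := dist_le (p.takeUntil z hz)
  have := dist_le (p.dropUntil z hz)
  omega

theorem preconnected_induce_compl_of_forall_walk {S : Set V} (r : V)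
    (h : ∀ x ∉ S, ∃ w : G.Walk r x, ∀ z ∈ w.support, z ∉ S) :
    (G.induce Sᶜ).Preconnected := by
  rintro ⟨x, hx⟩ ⟨y, hy⟩
  obtain ⟨wx, hwx⟩ := h x hx
  obtain ⟨wy, hwy⟩ := h y hy
  refine ⟨(wx.reverse.append wy).induce Sᶜ fun z hz => ?_⟩
  rw [Walk.support_append, Walk.support_reverse, List.mem_append, List.mem_reverse] at hz
  exact hz.elim (hwx z) fun hz => hwy z (List.mem_of_mem_tail hz)

theorem Connected.preconnected_induce_compl_of_lt_dist_add_dist (hG : G.Connected) {S : Set V}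
    (r : V) (hS : ∀ x ∉ S, ∀ z ∈ S, G.dist r x < G.dist r z + G.dist z x) :
    (G.induce Sᶜ).Preconnected := by
  classical
  refine preconnected_induce_compl_of_forall_walk r fun x hx => ?_
  obtain ⟨w, hw⟩ := hG.exists_walk_length_eq_dist r x
  exact ⟨w, fun z hz hzS => (hS x hx z hzS).not_ge (w.dist_add_dist_le_of_mem_support hw hz)⟩

theorem Connected.exists_adj_dist_add_one_eq (hG : G.Connected) {r u : V} (hru : r ≠ u) :
    ∃ p, G.Adj p u ∧ G.dist r p + 1 = G.dist r u := by
  obtain ⟨P, hP⟩ := hG.exists_walk_length_eq_dist r u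
  obtain ⟨p, hup, q, hq⟩ := P.reverse.exists_eq_cons_of_ne hru.symm
  have hlen := congrArg Walk.length hq
  rw [Walk.length_reverse, Walk.length_cons, hP] at hlen
  have hle := dist_le q.reverse
  have htri := hG.dist_triangle (u := r) (v := p) (w := u)
  rw [Walk.length_reverse] at hle
  rw [dist_eq_one_iff_adj.mpr hup.symm] at htri
  exact ⟨p, hup.symm, by omega⟩

theorem Connected.exists_gpow_adj_preconnected_induce_compl [Finite V] [Nontrivial V]
    (hG : G.Connected) : ∃ a b, (gpow G 2).Adj a b ∧ (G.induce {a, b}ᶜ).Preconnected := by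
  obtain ⟨r⟩ := hG.nonempty
  obtain ⟨u, hu⟩ := Finite.exists_max (G.dist r)
  have hru : r ≠ u := by
    rintro rfl
    obtain ⟨x, hx⟩ := exists_ne r
    have := hu x
    have := hG.pos_dist_of_ne hx.symm
    rw [dist_self] at *
    omega
  have hfar : ∀ z x, G.dist r z = G.dist r u → x ≠ z → G.dist r x < G.dist r z + G.dist z x :=
    fun z x hz hx => hz ▸ (hu x).trans_lt (Nat.lt_add_of_pos_right (hG.pos_dist_of_ne hx.symm))
  obtain ⟨p, hpu, hdp⟩ := hG.exists_adj_dist_add_one_eq hru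
  by_cases hw : ∃ w ≠ u, G.Adj p w ∧ G.dist r w = G.dist r u
  · obtain ⟨w, hwu, hpw, hdw⟩ := hw
    refine ⟨u, w, ⟨hwu.symm, ?_⟩, hG.preconnected_induce_compl_of_lt_dist_add_dist r ?_⟩
    · exact (dist_le (.cons hpu.symm (.cons hpw .nil))).trans (by simp)
    · intro x hx z hz
      obtain ⟨hxu, hxw⟩ : x ≠ u ∧ x ≠ w := by simpa [not_or] using hx
      obtain rfl | rfl : z = u ∨ z = w := by simpa using hz
      · exact hfar _ x rfl hxu
      · exact hfar _ x hdw hxw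
  · push Not at hw
    refine ⟨u, p, ⟨hpu.ne.symm, (dist_eq_one_iff_adj.mpr hpu.symm).trans_le one_le_two⟩,
      hG.preconnected_induce_compl_of_lt_dist_add_dist r ?_⟩
    intro x hx z hz
    obtain ⟨hxu, hxp⟩ : x ≠ u ∧ x ≠ p := by simpa [not_or] using hx
    obtain rfl | rfl : z = u ∨ z = p := by simpa using hz
    · exact hfar _ x rfl hxu
    · have := hu x
      have := hG.pos_dist_of_ne hxp.symm
      by_cases hzx : G.Adj z x
      · have := hw x hxu hzx
        omega
      · have := hG.one_lt_dist_of_ne_of_not_adj hxp.symm hzx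
        omega

theorem Subgraph.IsPerfectMatching.exists_of_range_eq_compl_pair {G' : SimpleGraph W}
    {M' : G'.Subgraph} (hM' : M'.IsPerfectMatching) (f : G' →g G) (hf : Function.Injective f)
    {a b : V} (hrange : Set.range f = {a, b}ᶜ) (hab : G.Adj a b) :
    ∃ M : G.Subgraph, M.IsPerfectMatching := by
  have hdisj : Disjoint (M'.map f).support (G.subgraphOfAdj hab).support := by
    refine Set.disjoint_of_subset (Subgraph.support_subset_verts _)
      (Subgraph.support_subset_verts _) ?_
    rw [Subgraph.map_verts, subgraphOfAdj_verts, ← Set.subset_compl_iff_disjoint_right, ← hrange]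
    exact Set.image_subset_range _ _
  refine ⟨M'.map f ⊔ G.subgraphOfAdj hab,
    (hM'.1.map f hf).sup (.subgraphOfAdj hab) hdisj, fun v => ?_⟩
  by_cases hv : v ∈ ({a, b} : Set V)
  · exact Or.inr hv
  · obtain ⟨w, rfl⟩ : v ∈ Set.range f := hrange ▸ hv
    exact Or.inl ⟨w, hM'.2 w, rfl⟩

theorem Preconnected.exists_isPerfectMatching_gpow_two [Finite V] (hG : G.Preconnected)
    (heven : Even (Nat.card V)) : ∃ M : (gpow G 2).Subgraph, M.IsPerfectMatching := by
  induction h : Nat.card V using Nat.strong_induction_on generalizing V with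
  | _ n ih =>
  subst h
  rcases isEmpty_or_nonempty V with hV | hV
  · exact ⟨⊥, fun v => isEmptyElim v, fun v => isEmptyElim v⟩
  have : Nontrivial V := by
    rw [← Finite.one_lt_card_iff_nontrivial]
    have := Nat.card_pos (α := V)
    obtain ⟨k, hk⟩ := heven
    omega
  obtain ⟨a, b, hab, hpre⟩ := (Connected.mk hG).exists_gpow_adj_preconnected_induce_compl
  have hcard : Nat.card ({a, b}ᶜ : Set V) + 2 = Nat.card V := by
    rw [Nat.card_coe_set_eq, ← Set.ncard_pair hab.1, add_comm, Set.ncard_add_ncard_compl]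
  have heven' : Even (Nat.card ({a, b}ᶜ : Set V)) := by
    rw [← hcard] at heven
    simpa [parity_simps] using heven
  obtain ⟨M', hM'⟩ := ih _ (by omega) hpre heven' rfl
  exact hM'.exists_of_range_eq_compl_pair ((Embedding.induce _).gpow hpre 2)
    Subtype.val_injective Subtype.range_coe hab

end SimpleGraph

theorem square_has_perfect_matching {V : Type*} [Fintype V] (G : SimpleGraph V)
    (hG : G.Connected) (heven : Even (Fintype.card V)) :
    ∃ M : (gpow G 2).Subgraph, M.IsPerfectMatching :=
  hG.preconnected.exists_isPerfectMatching_gpow_two (by rwa [Nat.card_eq_fintype_card])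
end

section
/- Let r ≥ 2 and let G be a connected graph whose order is divisible by r. Then G^{2r-2} contains a K_r-factor, i.e., a spanning subgraph each of whose components is a complete graph on r vertices. -/
open SimpleGraph Finset

/-!
Induct on a connected vertex set `s` with a root `x ∈ s`: `s` splits into a connected
remainder `R ∋ x` with `#R ≤ r` and parts of size `r` that are cliques of `G^(2r-2)`.
Pick a neighbour `y` of `x` and let `C` be the component of `y` in `s - x`; both `C` and
`s \ C` are connected and smaller, so the induction applies to `(C, y)` and `(s \ C, x)`.
A remainder of `C` of size `r` is a part by itself. Otherwise both remainders lie within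
distance `r - 1` of `x`, so once a connected set of the right size around `x` is kept back,
the rest of their union (at most `r` vertices) is a clique of `G^(2r-2)`. For `s = V`
divisibility forces `#R = r`.
-/

namespace SimpleGraph

variable {V : Type*} {G : SimpleGraph V}

lemma exists_walk_support_subset_of_induce_connected {s : Set V}
    (hs : (G.induce s).Connected) {a b : V} (ha : a ∈ s) (hb : b ∈ s) :
    ∃ p : G.Walk a b, ∀ z ∈ p.support, z ∈ s := by
  obtain ⟨p⟩ := hs.preconnected ⟨a, ha⟩ ⟨b, hb⟩
  refine ⟨p.map (Embedding.induce s).toHom, fun z hz => ?_⟩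
  obtain ⟨z, -, rfl⟩ := List.mem_map.1 ((Walk.support_map _ _) ▸ hz)
  exact z.2

lemma induce_connected_of_forall_exists_walk {s : Set V} {u : V} (hu : u ∈ s)
    (h : ∀ v ∈ s, ∃ p : G.Walk u v, ∀ z ∈ p.support, z ∈ s) : (G.induce s).Connected :=
  induce_connected_of_patches u hu fun {v} hv => by
    obtain ⟨p, hp⟩ := h v hv
    exact ⟨{z | z ∈ p.support}, hp, p.start_mem_support, p.end_mem_support,
      p.connected_induce_support.preconnected _ _⟩

lemma induce_insert_connected {s : Set V} (hs : (G.induce s).Connected) {v w : V}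
    (hw : w ∈ s) (hvw : G.Adj v w) : (G.induce (insert v s)).Connected := by
  rw [Set.insert_eq]
  exact connected_induce_union (by simp [Preconnected.of_subsingleton]) hs.preconnected rfl hw
    hvw

lemma reachable_of_induce_connected {s : Set V} (hs : (G.induce s).Connected) {a b : V}
    (ha : a ∈ s) (hb : b ∈ s) : G.Reachable a b :=
  (hs.preconnected ⟨a, ha⟩ ⟨b, hb⟩).map (Embedding.induce s).toHom

lemma dist_lt_card_of_induce_connected {s : Finset V} (hs : (G.induce (s : Set V)).Connected)
    {a b : V} (ha : a ∈ s) (hb : b ∈ s) : G.dist a b < #s := by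
  obtain ⟨p, hp, -⟩ := hs.exists_path_of_dist ⟨a, ha⟩ ⟨b, hb⟩
  calc G.dist a b ≤ (p.map (Embedding.induce (s : Set V)).toHom).length := dist_le _
    _ = p.length := Walk.length_map _ _
    _ < Fintype.card (s : Set V) := hp.length_lt
    _ = #s := by simp

lemma exists_adj_of_induce_connected {U R : Set V} (hU : (G.induce U).Connected) (hRU : R ⊆ U)
    {x v : V} (hx : x ∈ R) (hv : v ∈ U \ R) : ∃ a ∈ R, ∃ b ∈ U \ R, G.Adj a b := by
  obtain ⟨p, hp⟩ := exists_walk_support_subset_of_induce_connected hU (hRU hx) hv.1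
  obtain ⟨d, hd, ha, hb⟩ := p.exists_boundary_dart R hx hv.2
  exact ⟨d.fst, ha, d.snd, ⟨hp _ (p.dart_snd_mem_support_of_mem_darts hd), hb⟩, d.adj⟩

lemma exists_walk_support_subset_sdiff {s C : Set V} {x : V} (hxC : x ∉ C)
    (hC : ∀ v w, v ∈ s → v ≠ x → G.Adj v w → w ∈ C → v ∈ C) {v : V}
    (p : G.Walk v x) (hp : ∀ z ∈ p.support, z ∈ s) (hvC : v ∉ C) :
    ∃ q : G.Walk v x, ∀ z ∈ q.support, z ∈ s \ C := by
  induction p with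
  | nil => exact ⟨Walk.nil, by simpa using ⟨hp _ (by simp), hvC⟩⟩
  | @cons v w x hvw p ih =>
    have hvs : v ∈ s := hp v p.support.mem_cons_self
    by_cases hvx : v = x
    · subst hvx; exact ⟨Walk.nil, by simpa using ⟨hvs, hvC⟩⟩
    obtain ⟨q, hq⟩ := ih hxC hC (fun z hz => hp z (List.mem_cons_of_mem _ hz))
      fun hwC => hvC (hC v w hvs hvx hvw hwC)
    refine ⟨Walk.cons hvw q, fun z hz => ?_⟩
    rw [Walk.support_cons, List.mem_cons] at hz
    exact hz.elim (· ▸ ⟨hvs, hvC⟩) (hq z)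

lemma exists_adj_of_induce_connected_of_one_lt_card {s : Finset V}
    (hs : (G.induce (s : Set V)).Connected) {x : V} (hx : x ∈ s) (hs₁ : 1 < #s) :
    ∃ y ∈ s, G.Adj x y := by
  obtain ⟨v, hv, hvx⟩ := exists_mem_ne hs₁ x
  obtain ⟨x', hx', y, hy, hxy⟩ := exists_adj_of_induce_connected hs (R := {x})
    (by simpa using hx) rfl (by simpa using ⟨hv, hvx⟩)
  rw [Set.mem_singleton_iff] at hx'
  exact ⟨y, hy.1, hx' ▸ hxy⟩

variable [DecidableEq V]

lemma exists_induce_connected_card_eq {U : Finset V} (hU : (G.induce (U : Set V)).Connected)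
    {x : V} (hx : x ∈ U) {k : ℕ} (hk : 0 < k) (hkU : k ≤ #U) :
    ∃ R ⊆ U, x ∈ R ∧ #R = k ∧ (G.induce (R : Set V)).Connected := by
  induction k, hk using Nat.le_induction with
  | base =>
    exact ⟨{x}, by simpa using hx, mem_singleton_self x, card_singleton x,
      by simp [Connected.of_subsingleton]⟩
  | succ k hk ih =>
    obtain ⟨R, hRU, hxR, hRk, hR⟩ := ih (by omega)
    obtain ⟨v, hv⟩ : (U \ R).Nonempty := by
      rw [← card_pos, card_sdiff_of_subset hRU]; omega
    obtain ⟨a, ha, b, hb, hab⟩ :=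
      exists_adj_of_induce_connected hU (coe_subset.2 hRU) hxR (by simpa using hv)
    have hb' : b ∈ U \ R := by simpa using hb
    refine ⟨insert b R, insert_subset (sdiff_subset hb') hRU, mem_insert_of_mem hxR, ?_, ?_⟩
    · rw [card_insert_of_notMem (mem_sdiff.1 hb').2, hRk]
    · rw [coe_insert]
      exact induce_insert_connected hR ha hab.symm

lemma exists_induce_connected_split {s : Finset V} (hs : (G.induce (s : Set V)).Connected)
    {x y : V} (hx : x ∈ s) (hy : y ∈ s) (hxy : G.Adj x y) :
    ∃ C ⊆ s.erase x, y ∈ C ∧ (G.induce (C : Set V)).Connected ∧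
      (G.induce ((s \ C : Finset V) : Set V)).Connected := by
  classical
  set t := s.erase x
  set C := t.filter fun v => ∃ p : G.Walk y v, ∀ z ∈ p.support, z ∈ t
  have hyt : y ∈ t := mem_erase.2 ⟨hxy.ne.symm, hy⟩
  have hyC : y ∈ C := mem_filter.2 ⟨hyt, Walk.nil, by simpa using hyt⟩
  have hxC : x ∉ C := fun h => by simp [C, t] at h
  refine ⟨C, filter_subset _ _, hyC, ?_, ?_⟩
  · refine induce_connected_of_forall_exists_walk hyC fun v hv => ?_
    obtain ⟨-, p, hp⟩ := mem_filter.1 hv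
    refine ⟨p, fun z hz => mem_filter.2 ⟨hp z hz, p.takeUntil z hz, fun w hw => hp w ?_⟩⟩
    exact p.support_takeUntil_subset_support hz hw
  · have hC : ∀ v w, v ∈ (s : Set V) → v ≠ x → G.Adj v w → w ∈ (C : Set V) →
        v ∈ (C : Set V) := by
      intro v w hvs hvx hvw hw
      have hvt : v ∈ t := mem_erase.2 ⟨hvx, hvs⟩
      obtain ⟨-, q, hq⟩ := mem_filter.1 hw
      refine mem_filter.2 ⟨hvt, q.concat hvw.symm, fun z hz => ?_⟩
      simp only [Walk.support_concat, List.mem_append, List.mem_singleton] at hz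
      exact hz.elim (hq z) (· ▸ hvt)
    rw [coe_sdiff]
    refine induce_connected_of_forall_exists_walk (u := x) ⟨hx, hxC⟩ fun v hv => ?_
    obtain ⟨p, hp⟩ := exists_walk_support_subset_of_induce_connected hs hv.1 (mem_coe.2 hx)
    obtain ⟨q, hq⟩ := exists_walk_support_subset_sdiff (mem_coe.not.2 hxC) hC p hp hv.2
    exact ⟨q.reverse, fun z hz => hq z (by simpa using hz)⟩

end SimpleGraph

def HasCliqueFactorOn {V : Type*} [DecidableEq V] (H : SimpleGraph V) (r : ℕ) (s : Finset V) :
    Prop :=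
  ∃ P : Finpartition s, ∀ p ∈ P.parts, #p = r ∧ H.IsClique (p : Set V)

namespace HasCliqueFactorOn

variable {V : Type*} [DecidableEq V] {H : SimpleGraph V} {r : ℕ} {s t : Finset V}

lemma empty : HasCliqueFactorOn H r ∅ :=
  ⟨Finpartition.empty _, by simp⟩

lemma of_isClique (hs : #s = r) (hH : H.IsClique (s : Set V)) : HasCliqueFactorOn H r s := by
  rcases s.eq_empty_or_nonempty with rfl | hne
  · exact empty
  · exact ⟨Finpartition.indiscrete hne.ne_empty, by simp [hs, hH]⟩

lemma union (hst : Disjoint s t) (hs : HasCliqueFactorOn H r s) (ht : HasCliqueFactorOn H r t) :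
    HasCliqueFactorOn H r (s ∪ t) := by
  obtain ⟨P, hP⟩ := hs
  obtain ⟨Q, hQ⟩ := ht
  have hdisj : (↑(P.parts ∪ Q.parts) : Set (Finset V)).PairwiseDisjoint id := by
    rw [coe_union, Set.pairwiseDisjoint_union]
    exact ⟨P.disjoint, Q.disjoint, fun p hp q hq _ => hst.mono (P.le hp) (Q.le hq)⟩
  have hsup : (P.parts ∪ Q.parts).sup id = s ∪ t := by
    rw [sup_union, P.sup_parts, Q.sup_parts]; rfl
  refine ⟨(Finpartition.ofPairwiseDisjoint _ hdisj).copy hsup, fun p hp => ?_⟩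
  simp only [Finpartition.copy, Finpartition.ofPairwiseDisjoint_parts, mem_erase, mem_union] at hp
  exact hp.2.elim (hP p) (hQ p)

lemma sdiff_trans {u : Finset V} (hts : t ⊆ s) (hut : u ⊆ t)
    (hst : HasCliqueFactorOn H r (s \ t)) (htu : HasCliqueFactorOn H r (t \ u)) :
    HasCliqueFactorOn H r (s \ u) := by
  rw [← sdiff_union_sdiff_cancel hts hut]
  exact hst.union (sdiff_disjoint.mono_right sdiff_subset) htu

lemma union_sdiff_union {A B : Finset V} (hAB : Disjoint A B) (hsA : s ⊆ A) (htB : t ⊆ B)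
    (hA : HasCliqueFactorOn H r (A \ s)) (hB : HasCliqueFactorOn H r (B \ t)) :
    HasCliqueFactorOn H r ((A ∪ B) \ (s ∪ t)) := by
  have : (A ∪ B) \ (s ∪ t) = A \ s ∪ B \ t := by
    ext v
    grind [Finset.disjoint_left]
  rw [this]
  exact hA.union (hAB.mono sdiff_subset sdiff_subset) hB

lemma dvd_card (h : HasCliqueFactorOn H r s) : r ∣ #s := by
  obtain ⟨P, hP⟩ := h
  rw [← P.sum_card_parts, sum_congr rfl fun p hp => (hP p hp).1, sum_const, smul_eq_mul]
  exact dvd_mul_left _ _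

end HasCliqueFactorOn

namespace SimpleGraph

variable {V : Type*} {G : SimpleGraph V}

lemma isClique_gpow_of_reachable_dist_le {p : Set V} {x : V} {k : ℕ}
    (h : ∀ a ∈ p, G.Reachable x a ∧ G.dist x a ≤ k) : (gpow G (2 * k)).IsClique p := by
  intro a ha b hb hab
  have htri := (h a ha).1.symm.dist_triangle_left b
  have hxa := G.dist_comm (u := a) (v := x)
  exact ⟨hab, by linarith [(h a ha).2, (h b hb).2]⟩

lemma isClique_gpow_of_induce_connected {s : Finset V} (hs : (G.induce (s : Set V)).Connected)
    {k : ℕ} (hk : #s ≤ k + 1) : (gpow G k).IsClique (s : Set V) :=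
  fun a ha b hb hab => ⟨hab, by have := dist_lt_card_of_induce_connected hs ha hb; omega⟩

variable [DecidableEq V] {r : ℕ}

lemma dist_le_card_of_adj_of_induce_connected {s : Finset V}
    (hs : (G.induce (s : Set V)).Connected) {x y a : V} (hy : y ∈ s) (hxy : G.Adj x y)
    (ha : a ∈ s) : G.dist x a ≤ #s := by
  have hxs : (G.induce ((insert x s : Finset V) : Set V)).Connected := by
    rw [coe_insert]; exact induce_insert_connected hs hy hxy
  have := dist_lt_card_of_induce_connected hxs (mem_insert_self x s) (mem_insert_of_mem ha)
  have := card_insert_le x s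
  omega

lemma exists_connected_remainder_of_card_lt {U : Finset V}
    (hU : (G.induce (U : Set V)).Connected) {x : V} (hx : x ∈ U)
    (hdist : ∀ a ∈ U, G.dist x a ≤ r - 1) (hcard : #U < 2 * r) :
    ∃ R ⊆ U, x ∈ R ∧ #R ≤ r ∧ (G.induce (R : Set V)).Connected ∧
      HasCliqueFactorOn (gpow G (2 * r - 2)) r (U \ R) := by
  by_cases hUr : #U ≤ r
  · exact ⟨U, subset_rfl, hx, hUr, hU, by simpa using HasCliqueFactorOn.empty⟩
  obtain ⟨R, hRU, hxR, hRcard, hR⟩ :=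
    exists_induce_connected_card_eq hU hx (k := #U - r) (by omega) (by omega)
  refine ⟨R, hRU, hxR, by omega, hR, HasCliqueFactorOn.of_isClique ?_ ?_⟩
  · rw [card_sdiff_of_subset hRU]; omega
  · rw [← Nat.mul_sub_one]
    exact isClique_gpow_of_reachable_dist_le fun a ha =>
      ⟨reachable_of_induce_connected hU hx (sdiff_subset (mem_coe.1 ha)),
        hdist a (sdiff_subset (mem_coe.1 ha))⟩

theorem exists_connected_remainder (hr : 0 < r) {s : Finset V}
    (hs : (G.induce (s : Set V)).Connected) {x : V} (hx : x ∈ s) :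
    ∃ R ⊆ s, x ∈ R ∧ #R ≤ r ∧ (G.induce (R : Set V)).Connected ∧
      HasCliqueFactorOn (gpow G (2 * r - 2)) r (s \ R) := by
  induction hn : #s using Nat.strong_induction_on generalizing s x with | _ n ih =>
  by_cases hsr : #s ≤ r
  · exact ⟨s, subset_rfl, hx, hsr, hs, by simpa using HasCliqueFactorOn.empty⟩
  obtain ⟨y, hy, hxy⟩ := exists_adj_of_induce_connected_of_one_lt_card hs hx (by omega)
  obtain ⟨C, hCs, hyC, hC, hsC⟩ := exists_induce_connected_split hs hx hy hxy
  have hxC : x ∉ C := fun h => by simpa using hCs h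
  have hCs' : C ⊆ s := hCs.trans (erase_subset x s)
  obtain ⟨R₁, hR₁C, hyR₁, hR₁r, hR₁, hF₁⟩ :=
    ih #C (hn ▸ card_lt_card (ssubset_of_subset_of_ne hCs' (by rintro rfl; exact hxC hx)))
      hC hyC rfl
  obtain ⟨R₂, hR₂, hxR₂, hR₂r, hR₂c, hF₂⟩ :=
    ih #(s \ C) (hn ▸ card_lt_card (sdiff_ssubset hCs' ⟨y, hyC⟩)) hsC
      (mem_sdiff.2 ⟨hx, hxC⟩) rfl
  have hR₁₂ : Disjoint R₁ R₂ := disjoint_sdiff.mono hR₁C hR₂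
  have hR₁₂s : R₁ ∪ R₂ ⊆ s := union_subset (hR₁C.trans hCs') (hR₂.trans sdiff_subset)
  have hF : HasCliqueFactorOn (gpow G (2 * r - 2)) r (s \ (R₁ ∪ R₂)) := by
    simpa [union_sdiff_of_subset hCs'] using
      HasCliqueFactorOn.union_sdiff_union disjoint_sdiff hR₁C hR₂ hF₁ hF₂
  rcases hR₁r.eq_or_lt with hR₁r | hR₁r
  · refine ⟨R₂, hR₂.trans sdiff_subset, hxR₂, hR₂r, hR₂c,
      hF.sdiff_trans hR₁₂s subset_union_right ?_⟩
    rw [union_sdiff_cancel_right hR₁₂]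
    exact .of_isClique hR₁r (isClique_gpow_of_induce_connected hR₁ (by omega))
  have hU : (G.induce ((R₁ ∪ R₂ : Finset V) : Set V)).Connected := by
    rw [coe_union]
    exact connected_induce_union hR₁.preconnected hR₂c.preconnected hyR₁ hxR₂ hxy.symm
  have hdist : ∀ a ∈ R₁ ∪ R₂, G.dist x a ≤ r - 1 := by
    intro a ha
    rcases mem_union.1 ha with ha | ha
    · have := dist_le_card_of_adj_of_induce_connected hR₁ hyR₁ hxy ha
      omega
    · have := dist_lt_card_of_induce_connected hR₂c hxR₂ ha
      omega
  obtain ⟨R, hRU, hxR, hRr, hR, hFU⟩ := exists_connected_remainder_of_card_lt hU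
    (mem_union_right _ hxR₂) hdist (by have := card_union_le R₁ R₂; omega)
  exact ⟨R, hRU.trans hR₁₂s, hxR, hRr, hR, hF.sdiff_trans hR₁₂s hRU hFU⟩

end SimpleGraph

theorem power_has_clique_factor_general {V : Type*} [Fintype V] [DecidableEq V] (G : SimpleGraph V)
    (r : ℕ) (hG : G.Connected) (hdvd : r ∣ Fintype.card V) :
    HasCliqueFactor (gpow G (2 * r - 2)) r := by
  obtain ⟨x⟩ := hG.nonempty
  have hr : 0 < r := Nat.pos_of_ne_zero fun h => by
    simp [h, Fintype.card_eq_zero_iff] at hdvd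
    exact hdvd.elim x
  have huniv : (G.induce ((univ : Finset V) : Set V)).Connected := by
    rw [coe_univ]; exact (induceUnivIso G).connected_iff.2 hG
  obtain ⟨R, -, hxR, hRr, hR, hF⟩ := exists_connected_remainder hr huniv (mem_univ x)
  have hRcard : #R = r := by
    have hrest := hF.dvd_card
    rw [card_sdiff_of_subset (subset_univ R), card_univ] at hrest
    have hRdvd : r ∣ #R := by
      have := card_le_univ R
      simpa [Nat.sub_sub_self this] using Nat.dvd_sub hdvd hrest
    exact le_antisymm hRr (Nat.le_of_dvd (card_pos.2 ⟨x, hxR⟩) hRdvd)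
  have hRclique := HasCliqueFactorOn.of_isClique hRcard
    (isClique_gpow_of_induce_connected (k := 2 * r - 2) hR (by omega))
  have hFuniv := hF.union sdiff_disjoint hRclique
  rwa [sdiff_union_of_subset (subset_univ R)] at hFuniv

theorem power_has_clique_factor {V : Type*} [Fintype V] [DecidableEq V] (G : SimpleGraph V)
    (r : ℕ) (hr : 2 ≤ r) (hG : G.Connected) (hdvd : r ∣ Fintype.card V) :
    HasCliqueFactor (gpow G (2 * r - 2)) r :=
  power_has_clique_factor_general G r hG hdvd
end

section
/- Let G be a connected graph of order n and let n = n_1 + n_2 + ... + n_k be a partition of n into positive integers. Then V(G) can be partitioned into parts A_1, ..., A_k with |A_i| = n_i such that for each i there exists a subtree T_i of G of order at most 2n_i − 1 with A_i ⊆ V(T_i). -/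
open SimpleGraph Finset

/-!
Fix a breadth-first spanning tree of `G` with root `r`, given by its parent map `p`, and peel the
parts off one at a time, keeping the set `S` of unused vertices closed under `p`; then `S` spans a
subtree through `r`. To peel `s` vertices, take a deepest vertex `v` whose subtree in `S` has at
least `s` vertices, so that the subtrees of its children have fewer. Either the subtree of `v` has
exactly `s` vertices, or whole child subtrees are taken while they total fewer than `s`, and the
part is completed by a child-closed piece of one more child subtree. With `v` added, this lies in
a subtree of order at most `1 + (s - 1) + (s - 1) = 2s - 1`, and the unused vertices remain
closed under `p`.
-/

theorem Finset.exists_subset_not_insert {α : Type*} [DecidableEq α] {P : Finset α → Prop}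
    {C : Finset α} (h0 : P ∅) (hC : ¬ P C) :
    ∃ D ⊆ C, ∃ a ∈ C, a ∉ D ∧ P D ∧ ¬ P (insert a D) := by
  induction C using Finset.induction_on with
  | empty => exact absurd h0 hC
  | @insert a C ha ih =>
    by_cases hPC : P C
    · exact ⟨C, subset_insert _ _, a, mem_insert_self _ _, ha, hPC, hC⟩
    · obtain ⟨D, hD, b, hb, hbD, hPD, hPbD⟩ := ih hPC
      exact ⟨D, hD.trans (subset_insert _ _), b, mem_insert_of_mem hb, hbD, hPD, hPbD⟩

theorem InSubtree.mono {V : Type*} {G : SimpleGraph V} {A B : Set V} {m m' : ℕ}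
    (h : InSubtree G B m) (hAB : A ⊆ B) (hm : m ≤ m') : InSubtree G A m' :=
  let ⟨T, hT, hB, hcard⟩ := h
  ⟨T, hT, hAB.trans hB, hcard.trans hm⟩

section ParentMap

variable {V : Type*} {p : V → V} {S : Finset V} {u v : V}

open scoped Classical in
noncomputable def subtreeIn (p : V → V) (S : Finset V) (v : V) : Finset V :=
  {u ∈ S | ∃ m, p^[m] u = v}

open scoped Classical in
noncomputable def childrenIn (p : V → V) (S : Finset V) (v : V) : Finset V :=
  {u ∈ S | p u = v ∧ u ≠ v}

def ChildClosed (p : V → V) (S A : Finset V) : Prop :=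
  ∀ x ∈ S, p x ∈ A → x ∈ A

theorem mem_subtreeIn : u ∈ subtreeIn p S v ↔ u ∈ S ∧ ∃ m, p^[m] u = v := by
  simp [subtreeIn]

theorem mem_childrenIn : u ∈ childrenIn p S v ↔ u ∈ S ∧ p u = v ∧ u ≠ v := by
  simp [childrenIn]

theorem subtreeIn_subset : subtreeIn p S v ⊆ S :=
  fun _ hu => (mem_subtreeIn.1 hu).1

theorem self_mem_subtreeIn (hv : v ∈ S) : v ∈ subtreeIn p S v :=
  mem_subtreeIn.2 ⟨hv, 0, rfl⟩

theorem childClosed_subtreeIn : ChildClosed p S (subtreeIn p S v) := by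
  intro x hx hpx
  obtain ⟨-, m, hm⟩ := mem_subtreeIn.1 hpx
  exact mem_subtreeIn.2 ⟨hx, m + 1, hm⟩

theorem ChildClosed.biUnion {ι : Type*} [DecidableEq V] {C : Finset ι} {F : ι → Finset V}
    (h : ∀ c ∈ C, ChildClosed p S (F c)) : ChildClosed p S (C.biUnion F) := by
  intro x hx hpx
  obtain ⟨c, hc, hpxc⟩ := mem_biUnion.1 hpx
  exact mem_biUnion.2 ⟨c, hc, h c hc x hx hpxc⟩

theorem ChildClosed.mapsTo_sdiff [DecidableEq V] {A : Finset V} (hA : ChildClosed p S A)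
    (hS : Set.MapsTo p S S) : Set.MapsTo p ↑(S \ A) ↑(S \ A) := fun x hx => by
  obtain ⟨hxS, hxA⟩ := mem_sdiff.1 (mem_coe.1 hx)
  exact mem_sdiff.2 ⟨hS hxS, fun h => hxA (hA x hxS h)⟩

theorem parent_mem_subtreeIn (hS : Set.MapsTo p S S) (hu : u ∈ subtreeIn p S v) (huv : u ≠ v) :
    p u ∈ subtreeIn p S v := by
  obtain ⟨huS, _ | m, hm⟩ := mem_subtreeIn.1 hu
  · exact absurd hm huv
  · exact mem_subtreeIn.2 ⟨hS huS, m, hm⟩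

theorem subtreeIn_subset_insert_biUnion [DecidableEq V] (hS : Set.MapsTo p S S) (v : V) :
    subtreeIn p S v ⊆ insert v ((childrenIn p S v).biUnion (subtreeIn p S)) := by
  intro u hu
  obtain ⟨huS, m, hm⟩ := mem_subtreeIn.1 hu
  clear hu
  induction m generalizing u with
  | zero => exact mem_insert.2 (Or.inl hm)
  | succ m ih =>
    rcases mem_insert.1 (ih (hS huS) hm) with hpu | hpu
    · by_cases huv : u = v
      · exact mem_insert.2 (Or.inl huv)
      · exact mem_insert_of_mem (mem_biUnion.2
          ⟨u, mem_childrenIn.2 ⟨huS, hpu, huv⟩, self_mem_subtreeIn huS⟩)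
    · obtain ⟨c, hc, hpuc⟩ := mem_biUnion.1 hpu
      exact mem_insert_of_mem (mem_biUnion.2 ⟨c, hc, childClosed_subtreeIn u huS hpuc⟩)

end ParentMap

namespace SimpleGraph

variable {V : Type*} {G : SimpleGraph V}

theorem Connected.inSubtree_of_induce {s : Set V} (h : (G.induce s).Connected) :
    InSubtree G s s.ncard := by
  obtain ⟨T, hle, hT⟩ := h.exists_isTree_le
  let f : Copy T G := (Copy.induce G s).comp (Copy.ofLE _ _ hle)
  have hverts : f.toSubgraph.verts = s := by
    ext x
    simp [f, Copy.toSubgraph, Copy.induce]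
  exact ⟨f.toSubgraph, f.isoToSubgraph.isTree_iff.1 hT, hverts.ge, by rw [hverts]⟩

/-- `p` is the parent map of a breadth-first spanning tree of `G` rooted at `r`. -/
structure IsParentMap (G : SimpleGraph V) (r : V) (p : V → V) : Prop where
  map_root : p r = r
  adj : ∀ v, v ≠ r → G.Adj v (p v)
  dist_map : ∀ v, v ≠ r → G.dist r (p v) + 1 = G.dist r v

theorem Connected.exists_isParentMap (hG : G.Connected) (r : V) : ∃ p, G.IsParentMap r p := by
  have step : ∀ v, v ≠ r → ∃ u, G.Adj v u ∧ G.dist r u + 1 = G.dist r v := by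
    intro v hv
    obtain ⟨w, hw⟩ := hG.exists_walk_length_eq_dist v r
    rcases w with _ | @⟨_, u, _, hadj, q⟩
    · exact absurd rfl hv
    · refine ⟨u, hadj, le_antisymm ?_ ?_⟩
      · have := dist_le q
        rw [Walk.length_cons, dist_comm] at hw
        rw [dist_comm]
        omega
      · have := hG.dist_triangle (u := r) (v := u) (w := v)
        rwa [dist_eq_one_iff_adj.2 hadj.symm] at this
  choose! f hf using step
  classical
  exact ⟨fun v => if v = r then r else f v, by simp, fun v hv => by simpa [hv] using (hf v hv).1,
    fun v hv => by simpa [hv] using (hf v hv).2⟩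

namespace IsParentMap

variable {r : V} {p : V → V}

theorem exists_iterate_eq_root (hp : G.IsParentMap r p) (u : V) : ∃ m, p^[m] u = r := by
  induction hd : G.dist r u using Nat.strong_induction_on generalizing u with
  | _ d ih =>
    by_cases hur : u = r
    · exact ⟨0, hur⟩
    · obtain ⟨m, hm⟩ := ih _ (by have := hp.dist_map u hur; omega) (p u) rfl
      exact ⟨m + 1, hm⟩

theorem induce_connected (hp : G.IsParentMap r p) {B : Set V} {v : V} (hv : v ∈ B)
    (hB : ∀ x ∈ B, x ≠ v → x ≠ r ∧ p x ∈ B) : (G.induce B).Connected := by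
  have reach : ∀ x (hx : x ∈ B), (G.induce B).Reachable ⟨x, hx⟩ ⟨v, hv⟩ := by
    intro x
    induction hd : G.dist r x using Nat.strong_induction_on generalizing x with
    | _ d ih =>
      intro hx
      by_cases hxv : x = v
      · subst hxv; rfl
      · obtain ⟨hxr, hpx⟩ := hB x hx hxv
        have hadj : (G.induce B).Adj ⟨x, hx⟩ ⟨p x, hpx⟩ := hp.adj x hxr
        exact hadj.reachable.trans (ih _ (by have := hp.dist_map x hxr; omega) _ rfl hpx)
  have : Nonempty B := ⟨⟨v, hv⟩⟩
  exact ⟨fun a b => (reach a a.2).trans (reach b b.2).symm⟩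

theorem inSubtree (hp : G.IsParentMap r p) {B : Finset V} {v : V} (hv : v ∈ B)
    (hB : ∀ x ∈ B, x ≠ v → x ≠ r ∧ p x ∈ B) : InSubtree G B B.card := by
  simpa using (hp.induce_connected (B := B) hv hB).inSubtree_of_induce

variable {S : Finset V}

theorem eq_root_of_root_mem_subtreeIn (hp : G.IsParentMap r p) {v : V}
    (h : r ∈ subtreeIn p S v) : v = r := by
  obtain ⟨-, m, hm⟩ := mem_subtreeIn.1 h
  rw [Function.iterate_fixed hp.map_root] at hm
  exact hm.symm

theorem subtreeIn_root (hp : G.IsParentMap r p) : subtreeIn p S r = S := by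
  ext u
  simp [mem_subtreeIn, hp.exists_iterate_eq_root u]

theorem dist_of_mem_childrenIn (hp : G.IsParentMap r p) {c v : V} (hc : c ∈ childrenIn p S v) :
    G.dist r c = G.dist r v + 1 := by
  obtain ⟨-, hpc, hcv⟩ := mem_childrenIn.1 hc
  have hcr : c ≠ r := by
    rintro rfl
    exact hcv (hpc ▸ hp.map_root).symm
  rw [← hp.dist_map c hcr, hpc]

theorem inSubtree_insert_biUnion [DecidableEq V] (hp : G.IsParentMap r p)
    (hS : Set.MapsTo p S S) {v : V} {C : Finset V} (hC : C ⊆ childrenIn p S v) :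
    InSubtree G ↑(insert v (C.biUnion (subtreeIn p S)))
      (insert v (C.biUnion (subtreeIn p S))).card := by
  refine hp.inSubtree (mem_insert_self _ _) fun x hx hxv => ?_
  obtain ⟨c, hc, hxc⟩ := mem_biUnion.1 ((mem_insert.1 hx).resolve_left hxv)
  obtain ⟨-, hpc, hcv⟩ := mem_childrenIn.1 (hC hc)
  refine ⟨?_, ?_⟩
  · rintro rfl
    have hcr := hp.eq_root_of_root_mem_subtreeIn hxc
    exact hcv (by rw [← hpc, hcr, hp.map_root])
  · by_cases hxc' : x = c
    · exact hxc' ▸ hpc ▸ mem_insert_self _ _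
    · exact mem_insert_of_mem (mem_biUnion.2 ⟨c, hc, parent_mem_subtreeIn hS hxc hxc'⟩)

theorem exists_childClosed_between (hp : G.IsParentMap r p) {X Y : Finset V}
    (hX : ChildClosed p S X) (hY : ChildClosed p S Y) (hYX : Y ⊆ X) {t : ℕ}
    (hYt : Y.card ≤ t) (htX : t ≤ X.card) :
    ∃ A, Y ⊆ A ∧ A ⊆ X ∧ A.card = t ∧ ChildClosed p S A := by
  classical
  obtain ⟨d, rfl⟩ := Nat.exists_eq_add_of_le hYt
  induction d with
  | zero => exact ⟨Y, subset_rfl, hYX, rfl, hY⟩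
  | succ d ih =>
    obtain ⟨A, hYA, hAX, hAcard, hA⟩ := ih (by omega) (by omega)
    have hne : (X \ A).Nonempty := by
      rw [← card_pos, card_sdiff_of_subset hAX]
      omega
    -- adding a deepest vertex of `X \ A` keeps `A` closed under children
    obtain ⟨x, hx, hmax⟩ := exists_max_image (X \ A) (G.dist r) hne
    obtain ⟨hxX, hxA⟩ := mem_sdiff.1 hx
    refine ⟨insert x A, hYA.trans (subset_insert _ _), insert_subset hxX hAX,
      by rw [card_insert_of_notMem hxA, hAcard]; rfl, fun y hy hpy => ?_⟩
    rcases mem_insert.1 hpy with hpy | hpy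
    · by_contra hyxA
      have hyr : y ≠ r := by
        rintro rfl
        exact hyxA (mem_insert.2 (Or.inl (hpy ▸ hp.map_root).symm))
      have hyX : y ∈ X := hX y hy (hpy ▸ hxX)
      have := hmax y (mem_sdiff.2 ⟨hyX, fun h => hyxA (mem_insert_of_mem h)⟩)
      have := hp.dist_map y hyr
      rw [hpy] at this
      omega
    · exact mem_insert_of_mem (hA y hy hpy)

theorem exists_peel (hp : G.IsParentMap r p) (hS : Set.MapsTo p S S) {s : ℕ} (hs : 0 < s)
    (hsS : s ≤ S.card) :
    ∃ A ⊆ S, A.card = s ∧ ChildClosed p S A ∧ InSubtree G A (2 * s - 1) := by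
  classical
  obtain ⟨x, hx⟩ := card_pos.1 (hs.trans_le hsS)
  have hrS : r ∈ S := by
    obtain ⟨m, hm⟩ := hp.exists_iterate_eq_root x
    exact hm ▸ hS.iterate m hx
  obtain ⟨v, hv, hmax⟩ := exists_max_image {v ∈ S | s ≤ (subtreeIn p S v).card} (G.dist r)
    ⟨r, mem_filter.2 ⟨hrS, hp.subtreeIn_root ▸ hsS⟩⟩
  have hsmall : ∀ c ∈ childrenIn p S v, (subtreeIn p S c).card < s := by
    intro c hc
    by_contra! hcs
    have := hmax c (mem_filter.2 ⟨(mem_childrenIn.1 hc).1, hcs⟩)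
    have := hp.dist_of_mem_childrenIn hc
    omega
  by_cases hbig : s ≤ ((childrenIn p S v).biUnion (subtreeIn p S)).card
  · obtain ⟨D, hD, u, hu, huD, hDs, huDs⟩ := exists_subset_not_insert
      (P := fun D => (D.biUnion (subtreeIn p S)).card < s) (by simpa using hs) (by simpa using hbig)
    have hclosed : ∀ C : Finset V, ChildClosed p S (C.biUnion (subtreeIn p S)) :=
      fun C => ChildClosed.biUnion fun _ _ => childClosed_subtreeIn
    obtain ⟨A, -, hAX, hAcard, hA⟩ := hp.exists_childClosed_between (hclosed _) (hclosed D)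
      (biUnion_subset_biUnion_of_subset_left _ (subset_insert u D)) hDs.le (not_lt.1 huDs)
    have hB := hp.inSubtree_insert_biUnion hS (insert_subset hu hD)
    refine ⟨A, hAX.trans (biUnion_subset.2 fun _ _ => subtreeIn_subset), hAcard, hA,
      hB.mono (hAX.trans (subset_insert _ _)) ?_⟩
    -- the tree is `v` together with fewer than `s` vertices below `u` and fewer than `s` below `D`
    calc (insert v ((insert u D).biUnion (subtreeIn p S))).card
        ≤ (subtreeIn p S u).card + (D.biUnion (subtreeIn p S)).card + 1 := by
          rw [biUnion_insert]
          exact (card_insert_le _ _).trans (by grw [card_union_le])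
      _ ≤ 2 * s - 1 := by have := hsmall u hu; omega
  · have hcard : (subtreeIn p S v).card = s := by
      have := card_le_card (subtreeIn_subset_insert_biUnion hS v)
      have := card_insert_le v ((childrenIn p S v).biUnion (subtreeIn p S))
      have := (mem_filter.1 hv).2
      omega
    have hB := hp.inSubtree_insert_biUnion hS (subset_refl (childrenIn p S v))
    refine ⟨subtreeIn p S v, subtreeIn_subset, hcard, childClosed_subtreeIn,
      hB.mono (subtreeIn_subset_insert_biUnion hS v) ?_⟩
    have := card_insert_le v ((childrenIn p S v).biUnion (subtreeIn p S))
    omega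

theorem exists_partition (hp : G.IsParentMap r p) (k : ℕ) :
    ∀ (S : Finset V) (n : Fin k → ℕ), Set.MapsTo p S S → (∀ i, 0 < n i) →
      ∑ i, n i = S.card →
      ∃ A : Fin k → Finset V,
        (∀ i j, i ≠ j → Disjoint (A i) (A j)) ∧ (∀ v ∈ S, ∃ i, v ∈ A i) ∧
        ∀ i, A i ⊆ S ∧ (A i).card = n i ∧ InSubtree G (↑(A i)) (2 * n i - 1) := by
  classical
  induction k with
  | zero =>
    intro S n _ _ hsum
    have hS : S = ∅ := card_eq_zero.1 (by simpa using hsum.symm)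
    exact ⟨Fin.elim0, fun i => i.elim0, by simp [hS], fun i => i.elim0⟩
  | succ k ih =>
    intro S n hS hpos hsum
    rw [Fin.sum_univ_succ] at hsum
    obtain ⟨A₀, hA₀S, hA₀card, hA₀closed, hA₀tree⟩ :=
      hp.exists_peel hS (hpos 0) (by omega)
    obtain ⟨A, hdisj, hcover, hA⟩ :=
      ih (S \ A₀) (Fin.tail n) (hA₀closed.mapsTo_sdiff hS) (fun i => hpos i.succ)
      (by rw [card_sdiff_of_subset hA₀S]; simp only [Fin.tail]; omega)
    have hA₀A : ∀ i, Disjoint A₀ (A i) := fun i => disjoint_sdiff.mono_right (hA i).1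
    refine ⟨Fin.cons A₀ A, ?_, ?_, ?_⟩
    · intro i j hij
      cases i using Fin.cases <;> cases j using Fin.cases
      · exact absurd rfl hij
      · exact hA₀A _
      · exact (hA₀A _).symm
      · exact hdisj _ _ (fun h => hij (congrArg Fin.succ h))
    · intro v hv
      by_cases hvA₀ : v ∈ A₀
      · exact ⟨0, hvA₀⟩
      · obtain ⟨i, hi⟩ := hcover v (mem_sdiff.2 ⟨hv, hvA₀⟩)
        exact ⟨i.succ, hi⟩
    · intro i
      cases i using Fin.cases
      · exact ⟨hA₀S, hA₀card, hA₀tree⟩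
      · obtain ⟨hAS, hAcard, hAtree⟩ := hA _
        exact ⟨hAS.trans sdiff_subset, hAcard, hAtree⟩

end IsParentMap

end SimpleGraph

theorem connected_partition_into_subtrees_general {V : Type*} [Fintype V]
    (G : SimpleGraph V) (hG : G.Connected) (k : ℕ) (n : Fin k → ℕ)
    (hpos : ∀ i, 0 < n i) (hsum : ∑ i, n i = Fintype.card V) :
    ∃ A : Fin k → Finset V,
      (∀ i j, i ≠ j → Disjoint (A i) (A j)) ∧ (∀ v : V, ∃ i, v ∈ A i) ∧
      ∀ i, (A i).card = n i ∧ InSubtree G (↑(A i)) (2 * n i - 1) := by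
  obtain ⟨r⟩ := hG.nonempty
  obtain ⟨p, hp⟩ := hG.exists_isParentMap r
  obtain ⟨A, hdisj, hcover, hA⟩ :=
    hp.exists_partition k univ n (fun _ _ => mem_univ _) hpos (by rw [hsum, card_univ])
  exact ⟨A, hdisj, fun v => hcover v (mem_univ v), fun i => (hA i).2⟩

theorem connected_partition_into_subtrees {V : Type*} [Fintype V] [DecidableEq V]
    (G : SimpleGraph V) (hG : G.Connected) (k : ℕ) (n : Fin k → ℕ)
    (hpos : ∀ i, 0 < n i) (hsum : ∑ i, n i = Fintype.card V) :
    ∃ A : Fin k → Finset V,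
      (∀ i j, i ≠ j → Disjoint (A i) (A j)) ∧ (∀ v : V, ∃ i, v ∈ A i) ∧
      ∀ i, (A i).card = n i ∧ InSubtree G (↑(A i)) (2 * n i - 1) :=
  connected_partition_into_subtrees_general G hG k n hpos hsum
end

section
/- Let r ≥ 2 and let T be the tree obtained from the star K_{1,r+1} by subdividing each edge exactly r−2 times. Then T has r^2 vertices, r divides its order, and T^{2r-3} does not contain a K_r-factor. -/
open SimpleGraph Finset

/-- The tree obtained from the star `K_{1,r+1}` by subdividing each edge `r-2` times:
`none` is the center, and `some (i, j)` is the vertex on the `i`-th leg at distance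
`j+1` from the center. -/
def starSubdiv (r : ℕ) : SimpleGraph (Option (Fin (r + 1) × Fin (r - 1))) :=
  SimpleGraph.fromRel (fun a b =>
    match a, b with
    | none, some (_, j) => (j : ℕ) = 0
    | some (i, j), some (i', j') => i = i' ∧ (j' : ℕ) = (j : ℕ) + 1
    | _, _ => False)


/-! The `r + 1` leaves of the subdivided star are pairwise at distance `2r - 2`, so they form an
independent set of the `(2r - 3)`-th power; the lower bound on their distance comes from the
1-Lipschitz function measuring signed depth along two chosen legs. A `K_r`-factor of a graph on
`r²` vertices has only `r` parts, each meeting an independent set at most once. -/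

namespace SimpleGraph

variable {V : Type*} {G : SimpleGraph V}

lemma Walk.abs_sub_le_length (f : V → ℤ) (hf : ∀ u v, G.Adj u v → |f u - f v| ≤ 1) {u v : V}
    (p : G.Walk u v) : |f u - f v| ≤ p.length := by
  induction p with
  | nil => simp
  | @cons a b c h q ih =>
    calc |f a - f c| ≤ |f a - f b| + |f b - f c| := abs_sub_le _ _ _
      _ ≤ 1 + q.length := add_le_add (hf _ _ h) ih
      _ = (q.cons h).length := by push_cast [Walk.length_cons]; ring

lemma Reachable.abs_sub_le_dist (f : V → ℤ) (hf : ∀ u v, G.Adj u v → |f u - f v| ≤ 1)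
    {u v : V} (h : G.Reachable u v) : |f u - f v| ≤ G.dist u v := by
  obtain ⟨p, hp⟩ := h.exists_walk_length_eq_dist
  exact hp ▸ p.abs_sub_le_length f hf

end SimpleGraph

lemma HasCliqueFactor.card_mul_le_of_isIndepSet {V : Type*} [Fintype V] [DecidableEq V]
    {H : SimpleGraph V} {r : ℕ} (hH : HasCliqueFactor H r) {s : Finset V}
    (hs : H.IsIndepSet (s : Set V)) : #s * r ≤ Fintype.card V := by
  obtain ⟨P, hP⟩ := hH
  have hparts : #P.parts * r = Fintype.card V := by
    rw [← Finset.sum_const_nat fun p hp => (hP p hp).1, P.sum_card_parts, card_univ]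
  have hinj : Set.InjOn P.part s := by
    intro a ha b hb hab
    by_contra hne
    have hpart := P.part_mem.2 (mem_univ a)
    refine hs ha hb hne ((hP _ hpart).2 (P.mem_part (mem_univ a)) ?_ hne)
    exact hab ▸ P.mem_part (mem_univ b)
  rw [← hparts]
  gcongr
  exact card_le_card_of_injOn P.part (fun a _ => P.part_mem.2 (mem_univ a)) hinj

section starSubdiv

variable {r : ℕ}

lemma card_starSubdiv_vertices (hr : 1 ≤ r) :
    Fintype.card (Option (Fin (r + 1) × Fin (r - 1))) = r ^ 2 := by
  obtain ⟨s, rfl⟩ : ∃ s, r = s + 1 := ⟨r - 1, by omega⟩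
  simp only [Fintype.card_option, Fintype.card_prod, Fintype.card_fin, Nat.add_sub_cancel]
  ring

lemma starSubdiv_reachable_none (i : Fin (r + 1)) (j : Fin (r - 1)) :
    (starSubdiv r).Reachable (some (i, j)) none := by
  obtain ⟨j, hj⟩ := j
  induction j with
  | zero => exact Adj.reachable (by simp [starSubdiv])
  | succ k ih =>
    have hadj : (starSubdiv r).Adj (some (i, ⟨k + 1, hj⟩)) (some (i, ⟨k, by omega⟩)) := by
      simp [starSubdiv, Fin.ext_iff]
    exact hadj.reachable.trans (ih _)

def legPotential (i i' : Fin (r + 1)) : Option (Fin (r + 1) × Fin (r - 1)) → ℤ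
  | none => 0
  | some (a, j) => if a = i then (j : ℤ) + 1 else if a = i' then -((j : ℤ) + 1) else 0

lemma abs_legPotential_sub_le_one (i i' : Fin (r + 1)) (u v : Option (Fin (r + 1) × Fin (r - 1)))
    (h : (starSubdiv r).Adj u v) : |legPotential i i' u - legPotential i i' v| ≤ 1 := by
  rw [starSubdiv, fromRel_adj] at h
  obtain ⟨hne, h⟩ := h
  rcases u with _ | ⟨a, j⟩ <;> rcases v with _ | ⟨b, k⟩
  · exact absurd rfl hne
  all_goals
    simp only [Fin.ext_iff, or_false, false_or] at h
    simp only [legPotential, Fin.ext_iff]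
    split_ifs <;> (rw [abs_le]; omega)

lemma starSubdiv_dist_of_ne {i i' : Fin (r + 1)} (hii' : i ≠ i') (j j' : Fin (r - 1)) :
    (j : ℕ) + j' + 2 ≤ (starSubdiv r).dist (some (i, j)) (some (i', j')) := by
  have hreach := (starSubdiv_reachable_none i j).trans (starSubdiv_reachable_none i' j').symm
  have h := hreach.abs_sub_le_dist (legPotential i i') (abs_legPotential_sub_le_one i i')
  simp only [legPotential, ↓reduceIte, if_neg hii'.symm] at h
  rw [abs_of_nonneg (by omega)] at h
  omega

end starSubdiv

theorem starSubdiv_no_clique_factor (r : ℕ) (hr : 2 ≤ r) :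
    Fintype.card (Option (Fin (r + 1) × Fin (r - 1))) = r ^ 2 ∧
    r ∣ Fintype.card (Option (Fin (r + 1) × Fin (r - 1))) ∧
    ¬ HasCliqueFactor (gpow (starSubdiv r) (2 * r - 3)) r := by
  have hcard := card_starSubdiv_vertices (by omega : 1 ≤ r)
  refine ⟨hcard, hcard ▸ dvd_pow_self r two_ne_zero, fun hfactor => ?_⟩
  let leaf : Fin (r + 1) → Option (Fin (r + 1) × Fin (r - 1)) :=
    fun i => some (i, ⟨r - 2, by omega⟩)
  have hleaf : leaf.Injective := fun i i' h => by simpa [leaf] using h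
  have hindep : (gpow (starSubdiv r) (2 * r - 3)).IsIndepSet (univ.map ⟨leaf, hleaf⟩ : Set _) := by
    simp only [coe_map, coe_univ, Set.image_univ]
    rintro _ ⟨i, rfl⟩ _ ⟨i', rfl⟩ hne ⟨-, hdist⟩
    have hfar :=
      starSubdiv_dist_of_ne (fun h => hne (congrArg _ h)) ⟨r - 2, by omega⟩ ⟨r - 2, by omega⟩
    dsimp only [Function.Embedding.coeFn_mk, leaf] at hdist hfar
    omega
  have hbound := hfactor.card_mul_le_of_isIndepSet hindep
  rw [card_map, card_univ, Fintype.card_fin, hcard] at hbound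
  nlinarith
end

section
/- Let r ≥ 2 be even and let G consist of two vertices u, v joined by r+2 internally disjoint paths of length r. Then G is 2-connected with r^2 + r vertices, the r+2 path-centers are pairwise at distance exactly r in G, and G^{r-1} contains no K_r-factor. -/
open SimpleGraph Finset

/-- The graph consisting of two vertices `u = Sum.inl ()` and `v = Sum.inr (Sum.inl ())`
joined by `r+2` internally disjoint paths of length `r`; `Sum.inr (Sum.inr (i, j))` is
the internal vertex of the `i`-th path at distance `j+1` from `u`. -/
def thetaGraph (r : ℕ) : SimpleGraph (Unit ⊕ Unit ⊕ (Fin (r + 2) × Fin (r - 1))) :=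
  SimpleGraph.fromRel (fun a b =>
    match a, b with
    | Sum.inl _, Sum.inr (Sum.inr (_, j)) => (j : ℕ) = 0
    | Sum.inr (Sum.inl _), Sum.inr (Sum.inr (_, j)) => (j : ℕ) = r - 2
    | Sum.inr (Sum.inr (i, j)), Sum.inr (Sum.inr (i', j')) =>
        i = i' ∧ (j' : ℕ) = (j : ℕ) + 1
    | _, _ => False)

/-!
Every vertex lies on one of the `r + 2` paths from `u` to `v`. After deleting at most one vertex,
each surviving vertex is still joined along its own path to `u` or to `v`, and some path from `u`
to `v` survives intact, so the graph is 2-connected. Two centres on different paths are joined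
through `u` by a walk of length `r`; conversely, the explicit distance function to one of them
changes by at most one along each edge, so no walk is shorter. Hence the `r + 2` centres are
pairwise non-adjacent in `G^(r-1)`, while a `K_r`-factor of the `r ^ 2 + r` vertices has only
`r + 1` cliques, each containing at most one centre.
-/

namespace SimpleGraph

variable {V : Type*} {G : SimpleGraph V}

theorem exists_walk_of_adj_succ (f : ℕ → V) {a b : ℕ} (hab : a ≤ b)
    (hadj : ∀ n, a ≤ n → n < b → G.Adj (f n) (f (n + 1))) :
    ∃ p : G.Walk (f a) (f b), p.length = b - a ∧
      ∀ z ∈ p.support, ∃ n, a ≤ n ∧ n ≤ b ∧ f n = z := by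
  induction b, hab using Nat.le_induction with
  | base =>
    exact ⟨.nil, by simp, fun z hz => ⟨a, le_rfl, le_rfl, (List.mem_singleton.1 hz).symm⟩⟩
  | succ b hab ih =>
    obtain ⟨p, hlen, hsupp⟩ := ih fun n h₁ h₂ => hadj n h₁ (by omega)
    refine ⟨p.concat (hadj b hab (by omega)), by simp only [Walk.length_concat]; omega,
      fun z hz => ?_⟩
    rw [Walk.support_concat, List.mem_append, List.mem_singleton] at hz
    rcases hz with hz | rfl
    · obtain ⟨n, h₁, h₂, rfl⟩ := hsupp z hz
      exact ⟨n, h₁, by omega, rfl⟩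
    · exact ⟨b + 1, by omega, le_rfl, rfl⟩

theorem Walk.reachable_induce {s : Set V} {x y : V} (p : G.Walk x y)
    (hp : ∀ z ∈ p.support, z ∈ s) (hx : x ∈ s) (hy : y ∈ s) :
    (G.induce s).Reachable ⟨x, hx⟩ ⟨y, hy⟩ :=
  (p.connected_induce_support.preconnected ⟨x, p.start_mem_support⟩
    ⟨y, p.end_mem_support⟩).map (induceHomOfLE _ hp).toHom

theorem Walk.le_add_length {f : V → ℤ} (hf : ∀ a b, G.Adj a b → f a ≤ f b + 1) {x y : V}
    (p : G.Walk x y) : f x ≤ f y + p.length := by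
  induction p with
  | nil => simp
  | cons h _ ih =>
    rw [Walk.length_cons]
    have := hf _ _ h
    omega

theorem Reachable.sub_le_dist {f : V → ℤ} (hf : ∀ a b, G.Adj a b → f a ≤ f b + 1)
    {x y : V} (h : G.Reachable x y) : f x - f y ≤ G.dist x y := by
  obtain ⟨p, hp⟩ := h.exists_walk_length_eq_dist
  have := p.le_add_length hf
  omega

end SimpleGraph

theorem HasCliqueFactor.card_mul_le_card_of_isIndepSet {V : Type*} [Fintype V] [DecidableEq V]
    {H : SimpleGraph V} {r : ℕ} (h : HasCliqueFactor H r) {s : Finset V}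
    (hs : H.IsIndepSet (s : Set V)) : #s * r ≤ Fintype.card V := by
  obtain ⟨P, hP⟩ := h
  have hparts : #P.parts * r = Fintype.card V := by
    rw [← Finset.card_univ, ← P.sum_card_parts, Finset.sum_congr rfl fun p hp => (hP p hp).1,
      sum_const, smul_eq_mul]
  have hmem (x : V) : x ∈ P.part x := P.mem_part_self.2 (mem_univ x)
  have hpart (x : V) : P.part x ∈ P.parts := P.part_mem.2 (mem_univ x)
  have hinj : Set.InjOn P.part s := fun x hx y hy hxy => by
    by_contra hne
    exact hs hx hy hne <| (hP _ (hpart x)).2 (hmem x) (hxy ▸ hmem y) hne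
  calc #s * r ≤ #P.parts * r :=
        Nat.mul_le_mul_right _ (card_le_card_of_injOn _ (fun x _ => hpart x) hinj)
    _ = Fintype.card V := hparts

section ThetaGraph

variable {r : ℕ}

/-- The vertex at distance `n` from `u` on the `i`-th path; it is `v` for every `n ≥ r`. -/
def thetaVertex (r : ℕ) (i : Fin (r + 2)) : ℕ → Unit ⊕ Unit ⊕ (Fin (r + 2) × Fin (r - 1))
  | 0 => .inl ()
  | n + 1 => if h : n < r - 1 then .inr (.inr (i, ⟨n, h⟩)) else .inr (.inl ())

theorem thetaVertex_zero (i : Fin (r + 2)) : thetaVertex r i 0 = .inl () := rfl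

theorem thetaVertex_succ (i : Fin (r + 2)) (j : Fin (r - 1)) :
    thetaVertex r i (j + 1) = .inr (.inr (i, j)) := by
  simp [thetaVertex]

theorem thetaVertex_self (hr : 2 ≤ r) (i : Fin (r + 2)) :
    thetaVertex r i r = .inr (.inl ()) := by
  obtain ⟨n, rfl⟩ : ∃ n, r = n + 1 := ⟨r - 1, by omega⟩
  simp [thetaVertex]

theorem thetaVertex_injOn (i : Fin (r + 2)) : Set.InjOn (thetaVertex r i) (Set.Iic r) := by
  rintro (_ | m) hm (_ | n) hn h <;> simp only [thetaVertex, Set.mem_Iic] at h hm hn <;> grind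

theorem exists_thetaVertex_eq (hr : 2 ≤ r) (z : Unit ⊕ Unit ⊕ (Fin (r + 2) × Fin (r - 1))) :
    ∃ i n, n ≤ r ∧ thetaVertex r i n = z := by
  rcases z with _ | _ | ⟨i, j⟩
  · exact ⟨0, 0, by omega, rfl⟩
  · exact ⟨0, r, le_rfl, thetaVertex_self hr 0⟩
  · exact ⟨i, j + 1, by omega, thetaVertex_succ i j⟩

theorem thetaGraph_adj_thetaVertex (hr : 2 ≤ r) (i : Fin (r + 2)) {n : ℕ} (hn : n < r) :
    (thetaGraph r).Adj (thetaVertex r i n) (thetaVertex r i (n + 1)) := by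
  rcases n with _ | n <;> simp only [thetaVertex, thetaGraph, fromRel_adj] <;> split_ifs <;>
    simp <;> omega

theorem thetaGraph_exists_walk (hr : 2 ≤ r) (i : Fin (r + 2)) {a b : ℕ} (hab : a ≤ b)
    (hb : b ≤ r) :
    ∃ p : (thetaGraph r).Walk (thetaVertex r i a) (thetaVertex r i b), p.length = b - a ∧
      ∀ z ∈ p.support, ∃ n, a ≤ n ∧ n ≤ b ∧ thetaVertex r i n = z :=
  exists_walk_of_adj_succ _ hab fun _ _ hn => thetaGraph_adj_thetaVertex hr i (by omega)

/-- For even `r`, the distance to the centre of the `i₀`-th path. -/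
def centerPotential (r : ℕ) (i₀ : Fin (r + 2)) :
    Unit ⊕ Unit ⊕ (Fin (r + 2) × Fin (r - 1)) → ℤ
  | .inr (.inr (i, j)) =>
      if i = i₀ then max ((j : ℤ) + 1 - (r / 2 : ℕ)) ((r / 2 : ℕ) - (j : ℤ) - 1)
      else (r / 2 : ℕ) + min ((j : ℤ) + 1) ((r : ℤ) - 1 - j)
  | _ => (r / 2 : ℕ)

theorem centerPotential_le_add_one (i₀ : Fin (r + 2)) {a b} (h : (thetaGraph r).Adj a b) :
    centerPotential r i₀ a ≤ centerPotential r i₀ b + 1 := by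
  rcases a with _ | _ | ⟨i, j⟩ <;> rcases b with _ | _ | ⟨i', j'⟩ <;>
    simp only [thetaGraph, fromRel_adj] at h <;> simp only [centerPotential] <;>
    grind [Fin.isLt]

theorem thetaGraph_dist_centers (hev : Even r) (c : Fin (r - 1)) (hc : (c : ℕ) + 1 = r / 2)
    {i i' : Fin (r + 2)} (hne : i ≠ i') :
    (thetaGraph r).dist (.inr (.inr (i, c))) (.inr (.inr (i', c))) = r := by
  have hr : 2 ≤ r := by omega
  have hwalk (i : Fin (r + 2)) :
      ∃ p : (thetaGraph r).Walk (.inl ()) (.inr (.inr (i, c))), p.length = r / 2 := by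
    obtain ⟨p, hp, -⟩ := thetaGraph_exists_walk hr i (Nat.zero_le ((c : ℕ) + 1)) (by omega)
    exact ⟨p.copy (thetaVertex_zero i) (thetaVertex_succ i c), by simp [hp, hc]⟩
  obtain ⟨p, hp⟩ := hwalk i
  obtain ⟨p', hp'⟩ := hwalk i'
  have hle := dist_le (p.reverse.append p')
  have hge :=
    Reachable.sub_le_dist (fun _ _ => centerPotential_le_add_one i') ⟨p.reverse.append p'⟩
  simp only [Walk.length_append, Walk.length_reverse, hp, hp'] at hle
  simp only [centerPotential, if_neg hne, if_true] at hge
  obtain ⟨k, rfl⟩ := hev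
  omega

end ThetaGraph

section ThetaConnectivity

variable {r : ℕ} {S : Set (Unit ⊕ Unit ⊕ (Fin (r + 2) × Fin (r - 1)))}

theorem thetaGraph_reachable_induce (hr : 2 ≤ r) (i : Fin (r + 2)) {a b : ℕ} (hab : a ≤ b)
    (hb : b ≤ r) (hS : ∀ n, a ≤ n → n ≤ b → thetaVertex r i n ∉ S) {x y}
    (hx : thetaVertex r i a = x) (hy : thetaVertex r i b = y) (hxS : x ∈ Sᶜ)
    (hyS : y ∈ Sᶜ) :
    ((thetaGraph r).induce Sᶜ).Reachable ⟨x, hxS⟩ ⟨y, hyS⟩ := by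
  subst hx hy
  obtain ⟨p, -, hp⟩ := thetaGraph_exists_walk hr i hab hb
  refine p.reachable_induce (fun z hz => ?_) hxS hyS
  obtain ⟨n, h₁, h₂, rfl⟩ := hp z hz
  exact hS n h₁ h₂

theorem thetaGraph_reachable_induce_inl_inr (hr : 2 ≤ r) (hS : S.Subsingleton)
    (hu : .inl () ∈ Sᶜ) (hv : .inr (.inl ()) ∈ Sᶜ) :
    ((thetaGraph r).induce Sᶜ).Reachable ⟨_, hu⟩ ⟨_, hv⟩ := by
  obtain ⟨i, hi⟩ : ∃ i : Fin (r + 2), ∀ j, .inr (.inr (i, j)) ∉ S := by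
    by_cases h : ∃ i₀ j₀, .inr (.inr (i₀, j₀)) ∈ S
    · obtain ⟨i₀, j₀, h₀⟩ := h
      obtain ⟨i, hi⟩ := exists_ne i₀
      exact ⟨i, fun j hj => hi (congrArg Prod.fst (Sum.inr_injective (Sum.inr_injective
        (hS hj h₀))))⟩
    · push Not at h
      exact ⟨0, h 0⟩
  refine thetaGraph_reachable_induce hr i r.zero_le le_rfl (fun n _ hn => ?_) rfl
    (thetaVertex_self hr i) hu hv
  rcases n with _ | n
  · exact hu
  · simp only [thetaVertex]
    split_ifs
    exacts [hi _, hv]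

/-- A deleted vertex on the path through `z` cuts off at most one of its two ends. -/
theorem thetaGraph_reachable_induce_inl_or_inr (hr : 2 ≤ r) (hS : S.Subsingleton) (z)
    (hz : z ∈ Sᶜ) :
    (∃ hu : .inl () ∈ Sᶜ, ((thetaGraph r).induce Sᶜ).Reachable ⟨_, hu⟩ ⟨z, hz⟩) ∨
      ∃ hv : .inr (.inl ()) ∈ Sᶜ,
        ((thetaGraph r).induce Sᶜ).Reachable ⟨z, hz⟩ ⟨_, hv⟩ := by
  obtain ⟨i, m, hm, rfl⟩ := exists_thetaVertex_eq hr z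
  by_cases hpre : ∀ n ≤ m, thetaVertex r i n ∉ S
  · exact .inl ⟨hpre 0 m.zero_le, thetaGraph_reachable_induce hr i m.zero_le hm
      (fun n _ hn => hpre n hn) rfl rfl _ _⟩
  push Not at hpre
  obtain ⟨n, hnm, hn⟩ := hpre
  have hsuf : ∀ n', m ≤ n' → n' ≤ r → thetaVertex r i n' ∉ S := by
    intro n' h₁ h₂ hn'
    have := thetaVertex_injOn i (Set.mem_Iic.2 (by omega)) (Set.mem_Iic.2 h₂) (hS hn hn')
    exact hz (by rwa [show m = n by omega])
  have hv : .inr (.inl ()) ∈ Sᶜ := thetaVertex_self hr i ▸ hsuf r hm le_rfl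
  exact .inr ⟨hv,
    thetaGraph_reachable_induce hr i hm le_rfl hsuf rfl (thetaVertex_self hr i) _ _⟩

theorem thetaGraph_connected_induce_compl (hr : 2 ≤ r) (hS : S.Subsingleton) :
    ((thetaGraph r).induce Sᶜ).Connected := by
  rw [connected_iff_exists_forall_reachable]
  by_cases hu : .inl () ∈ Sᶜ
  · refine ⟨⟨_, hu⟩, fun ⟨z, hz⟩ => ?_⟩
    rcases thetaGraph_reachable_induce_inl_or_inr hr hS z hz with ⟨_, h⟩ | ⟨hv, h⟩
    · exact h
    · exact (thetaGraph_reachable_induce_inl_inr hr hS hu hv).trans h.symm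
  · have hv : .inr (.inl ()) ∈ Sᶜ := fun hv => hu fun hu => by simpa using hS hu hv
    refine ⟨⟨_, hv⟩, fun ⟨z, hz⟩ => ?_⟩
    rcases thetaGraph_reachable_induce_inl_or_inr hr hS z hz with ⟨hu', _⟩ | ⟨_, h⟩
    · exact absurd hu' hu
    · exact h.symm

end ThetaConnectivity

section ThetaCliqueFactor

variable {r : ℕ}

theorem card_thetaGraph_vertices (hr : 1 ≤ r) :
    Fintype.card (Unit ⊕ Unit ⊕ (Fin (r + 2) × Fin (r - 1))) = r ^ 2 + r := by
  simp only [Fintype.card_sum, Fintype.card_prod, Fintype.card_fin, Fintype.card_unit]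
  zify [hr]
  ring

theorem thetaGraph_not_hasCliqueFactor (hr : 2 ≤ r) (hev : Even r) :
    ¬ HasCliqueFactor (gpow (thetaGraph r) (r - 1)) r := by
  intro hfactor
  let c : Fin (r - 1) := ⟨r / 2 - 1, by omega⟩
  let center : Fin (r + 2) ↪ Unit ⊕ Unit ⊕ (Fin (r + 2) × Fin (r - 1)) :=
    ⟨fun i => .inr (.inr (i, c)), fun i i' h => by simpa using h⟩
  have hindep : (gpow (thetaGraph r) (r - 1)).IsIndepSet (univ.map center : Set _) := by
    simp only [coe_map, coe_univ, Set.image_univ]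
    rintro _ ⟨i, rfl⟩ _ ⟨i', rfl⟩ hne hadj
    have : (thetaGraph r).dist (center i) (center i') = r :=
      thetaGraph_dist_centers hev c (by simp only [c]; omega) (center.injective.ne_iff.1 hne)
    exact absurd hadj.2 (by omega)
  have := hfactor.card_mul_le_card_of_isIndepSet hindep
  rw [card_map, card_univ, Fintype.card_fin, card_thetaGraph_vertices (by omega)] at this
  nlinarith

end ThetaCliqueFactor

theorem thetaGraph_no_clique_factor (r : ℕ) (hr : 2 ≤ r) (hev : Even r) :
    KConnected 2 (thetaGraph r) ∧
    Fintype.card (Unit ⊕ Unit ⊕ (Fin (r + 2) × Fin (r - 1))) = r ^ 2 + r ∧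
    (∀ c : Fin (r - 1), (c : ℕ) + 1 = r / 2 →
      ∀ i i' : Fin (r + 2), i ≠ i' →
        (thetaGraph r).dist (Sum.inr (Sum.inr (i, c))) (Sum.inr (Sum.inr (i', c))) = r) ∧
    ¬ HasCliqueFactor (gpow (thetaGraph r) (r - 1)) r := by
  have hcard := card_thetaGraph_vertices (by omega : 1 ≤ r)
  refine ⟨⟨?_, fun S hS => ?_⟩, hcard,
    fun c hc i i' hne => thetaGraph_dist_centers hev c hc hne,
    thetaGraph_not_hasCliqueFactor hr hev⟩
  · rw [Nat.card_eq_fintype_card, hcard]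
    nlinarith
  · exact thetaGraph_connected_induce_compl hr (Set.ncard_le_one_iff_subsingleton.1 (by omega))
end

section
/- Let G be a 2-connected graph that is not 3-connected, with minimum degree at least 3. Let {u,v} be a 2-cut of G for which the smallest component C of G − {u,v} has minimum possible order. Then C has at least two vertices, and for every vertex x of C, the graph G − x is 2-connected. -/
open SimpleGraph Finset

/-!
Let `C` be the minimal component of `G - {u, v}` and `R` the rest of `G - {u, v}`, and suppose
`{x, y}` with `x ∈ C` has a fragment `D`, with complementary fragment `E`. A fragment of
`{x, y}` avoiding `u` and `v` would, after discarding its part in `R` (cut off from `x` by `y`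
alone), lie in `C - x`, contradicting minimality. So `u ∈ D` and `v ∈ E`, say. If `y ∈ C`, the
parts of `R` in `D` and in `E` are cut off by `u`, resp. `v`, alone, and one of them is
nonempty. If `y ∉ C`, the parts of `C - x` in `D` and in `E` are fragments of `{x, u}`, resp.
`{x, v}`, smaller than `C`, and one of them is nonempty because `|C| ≥ 2`, which holds since a
lone vertex of `C` would have all its neighbours in `{u, v}`.
-/

lemma Set.exists_eq_pair_of_ncard_le_two {α : Type*} [Finite α] {X : Set α} {x : α}
    (hx : x ∈ X) (hX : X.ncard ≤ 2) : ∃ y, X = {x, y} := by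
  by_cases h : ∃ y ∈ X, y ≠ x
  · obtain ⟨y, hy, hyx⟩ := h
    refine ⟨y, (Set.eq_of_subset_of_ncard_le (Set.pair_subset hx hy) ?_).symm⟩
    rwa [Set.ncard_pair hyx.symm]
  · push Not at h
    refine ⟨x, ?_⟩
    rw [Set.pair_eq_singleton, Set.eq_singleton_iff_unique_mem]
    exact ⟨hx, h⟩

lemma Set.ncard_lt_of_subset_sdiff_singleton {α : Type*} [Finite α] {s t : Set α} {a : α}
    (hs : s ⊆ t \ {a}) (ha : a ∈ t) : s.ncard < t.ncard :=
  (Set.ncard_le_ncard hs).trans_lt (Set.ncard_sdiff_singleton_lt_of_mem ha)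

namespace SimpleGraph

variable {V : Type*} {G : SimpleGraph V}

def IsClosedOff (G : SimpleGraph V) (S F : Set V) : Prop :=
  ∀ a ∈ F, G.neighborSet a ⊆ F ∪ S

/-- A fragment of `S` is a nonempty union of components of `G - S` other than all of `G - S`. -/
structure IsFragment (G : SimpleGraph V) (S F : Set V) : Prop where
  nonempty : F.Nonempty
  disjoint : Disjoint F S
  closedOff : G.IsClosedOff S F
  exists_notMem : ∃ z, z ∉ F ∧ z ∉ S

namespace IsClosedOff

variable {S T A B : Set V}

lemma mono (h : G.IsClosedOff S A) (hST : S ⊆ T) : G.IsClosedOff T A :=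
  fun a ha => (h a ha).trans (Set.union_subset_union_right A hST)

lemma compl (h : G.IsClosedOff S A) : G.IsClosedOff S (A ∪ S)ᶜ := by
  intro a ha b hab
  by_contra hb
  simp only [Set.mem_union, Set.mem_compl_iff] at ha hb
  have haAS := h b (by tauto) hab.symm
  simp only [Set.mem_union] at haAS
  tauto

lemma inter (hA : G.IsClosedOff S A) (hB : G.IsClosedOff T B) :
    G.IsClosedOff (A ∩ T ∪ B ∩ S ∪ S ∩ T) (A ∩ B) := by
  rintro a ⟨haA, haB⟩ b hab
  have hbA := hA a haA hab
  have hbB := hB a haB hab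
  simp only [Set.mem_union, Set.mem_inter_iff] at hbA hbB ⊢
  tauto

lemma mem_of_reachable (h : G.IsClosedOff S A) {a b : ↥Sᶜ}
    (hab : (G.induce Sᶜ).Reachable a b) (ha : (a : V) ∈ A) : (b : V) ∈ A := by
  by_contra hb
  obtain ⟨p⟩ := hab
  obtain ⟨d, -, hd, hd'⟩ := p.exists_boundary_dart {c | (c : V) ∈ A} ha hb
  rcases h _ hd d.adj with h' | h'
  exacts [hd' h', d.snd.2 h']

end IsClosedOff

namespace IsFragment

variable {S F : Set V}

lemma notMem_of_mem (h : G.IsFragment S F) {s : V} (hs : s ∈ S) : s ∉ F :=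
  fun hF => Set.disjoint_left.mp h.disjoint hF hs

lemma compl (h : G.IsFragment S F) : G.IsFragment S (F ∪ S)ᶜ where
  nonempty := by
    obtain ⟨z, hzF, hzS⟩ := h.exists_notMem
    exact ⟨z, by simp [hzF, hzS]⟩
  disjoint := Set.disjoint_left.mpr fun _ ha hs => ha (Or.inr hs)
  closedOff := h.closedOff.compl
  exists_notMem := by
    obtain ⟨f, hf⟩ := h.nonempty
    exact ⟨f, by simp [hf], h.disjoint.notMem_of_mem_left hf⟩

lemma not_connected (h : G.IsFragment S F) : ¬ (G.induce Sᶜ).Connected := by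
  intro hconn
  obtain ⟨f, hf⟩ := h.nonempty
  obtain ⟨z, hzF, hzS⟩ := h.exists_notMem
  exact hzF <| h.closedOff.mem_of_reachable
    (hconn.preconnected ⟨f, h.disjoint.notMem_of_mem_left hf⟩ ⟨z, hzS⟩) hf

lemma exists_ncard_supp_le [Finite V] (h : G.IsFragment S F) :
    ∃ C : (G.induce Sᶜ).ConnectedComponent, C.supp.ncard ≤ F.ncard := by
  obtain ⟨f, hf⟩ := h.nonempty
  refine ⟨(G.induce Sᶜ).connectedComponentMk ⟨f, h.disjoint.notMem_of_mem_left hf⟩, ?_⟩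
  rw [← Set.ncard_image_of_injective _ Subtype.val_injective]
  refine Set.ncard_le_ncard ?_
  rintro _ ⟨a, ha, rfl⟩
  exact h.closedOff.mem_of_reachable (ConnectedComponent.exact ha).symm hf

lemma two_le_ncard [Finite V] (hdeg : ∀ w, S.ncard < (G.neighborSet w).ncard)
    (h : G.IsFragment S F) : 2 ≤ F.ncard := by
  obtain ⟨f, hf⟩ := h.nonempty
  by_contra hF
  have hsub : G.neighborSet f ⊆ S := by
    intro b hb
    rcases h.closedOff f hf hb with hbF | hbS
    · cases (Set.ncard_le_one_iff).mp (by omega) hf hbF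
      exact absurd hb (G.irrefl)
    · exact hbS
  exact (Set.ncard_le_ncard hsub).not_gt (hdeg f)

end IsFragment

lemma isFragment_image_supp {S : Set V} (h : ¬ (G.induce Sᶜ).Connected)
    (C : (G.induce Sᶜ).ConnectedComponent) : G.IsFragment S (Subtype.val '' C.supp) where
  nonempty := C.nonempty_supp.image _
  disjoint := Set.disjoint_left.mpr fun _ ⟨a, _, ha⟩ => ha ▸ a.2
  closedOff := by
    rintro _ ⟨a, ha, rfl⟩ b hab
    by_cases hb : b ∈ S
    · exact Or.inr hb
    · refine Or.inl ⟨⟨b, hb⟩, ?_, rfl⟩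
      rw [ConnectedComponent.mem_supp_iff] at ha ⊢
      exact (ConnectedComponent.connectedComponentMk_eq_of_adj
        (G := G.induce Sᶜ) (v := a) (w := ⟨b, hb⟩) hab).symm.trans ha
  exists_notMem := by
    by_contra hall
    push Not at hall
    obtain ⟨c, hc⟩ := C.nonempty_supp
    refine h ((connected_iff_exists_forall_reachable _).mpr ⟨c, fun w => ?_⟩)
    have hw : w ∈ C.supp := by
      by_contra hw
      exact w.2 (hall w fun ⟨w', hw', he⟩ => hw (Subtype.ext he ▸ hw'))
    exact ConnectedComponent.exact (hc.trans hw.symm)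

lemma connected_induce_compl_of_forall_not_isFragment {S : Set V} (hS : Sᶜ.Nonempty)
    (h : ∀ F, ¬ G.IsFragment S F) : (G.induce Sᶜ).Connected := by
  by_contra hconn
  obtain ⟨s, hs⟩ := hS
  exact h _ (isFragment_image_supp hconn ((G.induce Sᶜ).connectedComponentMk ⟨s, hs⟩))


section MinimalFragment

variable {C D : Set V} {u v x y : V}


lemma IsFragment.compl_inter_eq_empty_of_mem
    (h2conn : ∀ X F : Set V, X.ncard ≤ 1 → ¬ G.IsFragment X F)
    (hC : G.IsFragment {u, v} C) (hx : x ∈ C) (hy : y ∈ C)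
    (hD : G.IsFragment {x, y} D) (huD : u ∈ D) (hvD : v ∉ D) (hvT : v ∉ ({x, y} : Set V)) :
    (C ∪ {u, v})ᶜ ∩ D = ∅ := by
  by_contra hne
  have huC : u ∉ C := hC.notMem_of_mem (by simp)
  have hxD : x ∉ D := hD.notMem_of_mem (by simp)
  have hyD : y ∉ D := hD.notMem_of_mem (by simp)
  have huT : u ∉ ({x, y} : Set V) := fun h => hD.notMem_of_mem h huD
  refine h2conn {u} _ (Set.ncard_singleton u).le
    ⟨Set.nonempty_iff_ne_empty.mpr hne, ?_, (hC.closedOff.compl.inter hD.closedOff).mono ?_,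
      ⟨x, fun h => h.1 (Or.inl hx), fun h => huC (Set.mem_singleton_iff.mp h ▸ hx)⟩⟩
  · exact Set.disjoint_singleton_right.mpr fun h => h.1 (Or.inr (by simp))
  · intro w hw
    simp only [Set.mem_union, Set.mem_inter_iff, Set.mem_compl_iff, Set.mem_insert_iff,
      Set.mem_singleton_iff] at hw huT hvT ⊢
    grind

variable [Finite V]

lemma IsFragment.not_disjoint_of_minimal
    (h2conn : ∀ X F : Set V, X.ncard ≤ 1 → ¬ G.IsFragment X F)
    (hCmin : ∀ X F : Set V, X.ncard ≤ 2 → G.IsFragment X F → C.ncard ≤ F.ncard)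
    (hC : G.IsFragment {u, v} C) (hC2 : 2 ≤ C.ncard) (hx : x ∈ C)
    (hD : G.IsFragment {x, y} D) : ¬ Disjoint D {u, v} := by
  intro hDS
  have hxS : x ∉ ({u, v} : Set V) := hC.disjoint.notMem_of_mem_left hx
  have hRD : (C ∪ {u, v})ᶜ ∩ D = ∅ := by
    by_contra hne
    obtain ⟨z, hzC, hzy⟩ := Set.exists_ne_of_one_lt_ncard hC2 y
    refine h2conn {y} _ (Set.ncard_singleton y).le
      ⟨Set.nonempty_iff_ne_empty.mpr hne, ?_, (hC.closedOff.compl.inter hD.closedOff).mono ?_,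
        ⟨z, ?_, hzy⟩⟩
    · exact Set.disjoint_singleton_right.mpr fun h => hD.notMem_of_mem (by simp) h.2
    · intro w hw
      simp only [Set.mem_union, Set.mem_inter_iff, Set.mem_compl_iff, Set.mem_insert_iff,
        Set.mem_singleton_iff] at hw ⊢
      have := Set.disjoint_left.mp hDS
      simp only [Set.mem_insert_iff, Set.mem_singleton_iff] at this hxS
      grind
    · simp [hzC]
  have hDC : D ⊆ C \ {x} := by
    intro w hw
    refine ⟨?_, fun hwx => hD.notMem_of_mem ?_ hw⟩
    · by_contra hwC
      exact (Set.ext_iff.mp hRD w).mp ⟨fun h => h.elim hwC (Set.disjoint_left.mp hDS hw), hw⟩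
    · exact Set.mem_singleton_iff.mp hwx ▸ Set.mem_insert _ _
  exact (Set.ncard_lt_of_subset_sdiff_singleton hDC hx).not_ge
    (hCmin _ _ (Set.ncard_insert_le _ _ |>.trans (by simp)) hD)

lemma IsFragment.inter_eq_empty_of_mem
    (hCmin : ∀ X F : Set V, X.ncard ≤ 2 → G.IsFragment X F → C.ncard ≤ F.ncard)
    (hC : G.IsFragment {u, v} C) (hx : x ∈ C) (hy : y ∉ C)
    (hD : G.IsFragment {x, y} D) (huD : u ∈ D) (hvD : v ∉ D) (hvT : v ∉ ({x, y} : Set V)) :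
    C ∩ D = ∅ := by
  by_contra hne
  have huC : u ∉ C := hC.notMem_of_mem (by simp)
  have hxD : x ∉ D := hD.notMem_of_mem (by simp)
  have hyD : y ∉ D := hD.notMem_of_mem (by simp)
  have huT : u ∉ ({x, y} : Set V) := fun h => hD.notMem_of_mem h huD
  have hCD : G.IsFragment {x, u} (C ∩ D) := by
    refine ⟨Set.nonempty_iff_ne_empty.mpr hne, ?_, (hC.closedOff.inter hD.closedOff).mono ?_,
      ⟨y, fun h => hy h.1, ?_⟩⟩
    · simp [hxD, huC]
    · intro w hw
      simp only [Set.mem_union, Set.mem_inter_iff, Set.mem_insert_iff,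
        Set.mem_singleton_iff] at hw huT hvT ⊢
      grind
    · simp only [Set.mem_insert_iff, Set.mem_singleton_iff] at huT ⊢
      grind
  have hsub : C ∩ D ⊆ C \ {x} := fun w hw =>
    ⟨hw.1, fun hwx => hxD (Set.mem_singleton_iff.mp hwx ▸ hw.2)⟩
  exact (Set.ncard_lt_of_subset_sdiff_singleton hsub hx).not_ge
    (hCmin _ _ (Set.ncard_insert_le _ _ |>.trans (by simp)) hCD)

lemma IsFragment.notMem_compl_of_mem
    (h2conn : ∀ X F : Set V, X.ncard ≤ 1 → ¬ G.IsFragment X F)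
    (hCmin : ∀ X F : Set V, X.ncard ≤ 2 → G.IsFragment X F → C.ncard ≤ F.ncard)
    (hC : G.IsFragment {u, v} C) (hC2 : 2 ≤ C.ncard) (hx : x ∈ C)
    (hD : G.IsFragment {x, y} D) (huD : u ∈ D) : v ∉ (D ∪ {x, y})ᶜ := by
  intro hvE
  have hE := hD.compl
  have hC' : G.IsFragment {v, u} C := Set.pair_comm u v ▸ hC
  have hvD : v ∉ D := fun h => hvE (Or.inl h)
  have hvT : v ∉ ({x, y} : Set V) := fun h => hvE (Or.inr h)
  have huE : u ∉ (D ∪ {x, y})ᶜ := fun h => h (Or.inl huD)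
  have huT : u ∉ ({x, y} : Set V) := fun h => hD.notMem_of_mem h huD
  by_cases hy : y ∈ C
  · obtain ⟨r, hr⟩ := hC.compl.nonempty
    have hrT : r ∉ ({x, y} : Set V) := by
      rintro (rfl | rfl) <;> exact hr (Or.inl ‹_›)
    by_cases hrD : r ∈ D
    · exact (hC.compl_inter_eq_empty_of_mem h2conn hx hy hD huD hvD hvT).subset ⟨hr, hrD⟩
    · rw [Set.pair_comm] at hr
      exact (hC'.compl_inter_eq_empty_of_mem h2conn hx hy hE hvE huE huT).subset
        ⟨hr, fun h => h.elim hrD hrT⟩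
  · obtain ⟨z, hzC, hzx⟩ := Set.exists_ne_of_one_lt_ncard hC2 x
    have hzT : z ∉ ({x, y} : Set V) := by
      rintro (rfl | rfl)
      exacts [hzx rfl, hy hzC]
    by_cases hzD : z ∈ D
    · exact (hC.inter_eq_empty_of_mem hCmin hx hy hD huD hvD hvT).subset ⟨hzC, hzD⟩
    · exact (hC'.inter_eq_empty_of_mem hCmin hx hy hE hvE huE huT).subset
        ⟨hzC, fun h => h.elim hzD hzT⟩

theorem IsFragment.not_isFragment_pair_of_mem
    (h2conn : ∀ X F : Set V, X.ncard ≤ 1 → ¬ G.IsFragment X F)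
    (hCmin : ∀ X F : Set V, X.ncard ≤ 2 → G.IsFragment X F → C.ncard ≤ F.ncard)
    (hC : G.IsFragment {u, v} C) (hC2 : 2 ≤ C.ncard) (hx : x ∈ C) (y : V) :
    ¬ G.IsFragment {x, y} D := by
  intro hD
  obtain ⟨s, hsD, hs⟩ :=
    Set.not_disjoint_iff.mp (hC.not_disjoint_of_minimal h2conn hCmin hC2 hx hD)
  obtain ⟨t, htE, ht⟩ :=
    Set.not_disjoint_iff.mp (hC.not_disjoint_of_minimal h2conn hCmin hC2 hx hD.compl)
  have hst : s ≠ t := fun h => htE (Or.inl (h ▸ hsD))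
  simp only [Set.mem_insert_iff, Set.mem_singleton_iff] at hs ht
  obtain ⟨rfl, rfl⟩ | ⟨rfl, rfl⟩ : (s = u ∧ t = v) ∨ (s = v ∧ t = u) := by grind
  · exact hC.notMem_compl_of_mem h2conn hCmin hC2 hx hD hsD htE
  · exact (Set.pair_comm t s ▸ hC).notMem_compl_of_mem h2conn hCmin hC2 hx hD hsD htE

end MinimalFragment

lemma ncard_neighborSet_lt_card [Finite V] (w : V) : (G.neighborSet w).ncard < Nat.card V := by
  rw [← Set.ncard_univ]
  exact Set.ncard_lt_ncard (Set.ssubset_univ_iff.mpr fun h => G.irrefl (h ▸ Set.mem_univ w))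

noncomputable def induceInduceIso (G : SimpleGraph V) (s : Set V) (t : Set ↥s) :
    (G.induce s).induce t ≃g G.induce (Subtype.val '' t) where
  toEquiv := Equiv.Set.image Subtype.val t Subtype.val_injective
  map_rel_iff' := by
    rintro ⟨⟨a, has⟩, hat⟩ ⟨⟨b, hbs⟩, hbt⟩
    simp [Equiv.Set.image, Equiv.Set.imageOfInjOn]

lemma kConnected_two_induce_compl_singleton [Finite V] {x : V} (hV : 4 ≤ Nat.card V)
    (h : ∀ y F, ¬ G.IsFragment {x, y} F) : KConnected 2 (G.induce {x}ᶜ) := by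
  refine ⟨?_, fun S hS => ?_⟩
  · rw [Nat.card_coe_set_eq, Set.ncard_compl, Set.ncard_singleton]
    omega
  have hSx : (insert x (Subtype.val '' S)).ncard ≤ 2 := by
    have := Set.ncard_image_le (f := Subtype.val) S.toFinite
    have := Set.ncard_insert_le x (Subtype.val '' S)
    omega
  obtain ⟨y, hy⟩ := Set.exists_eq_pair_of_ncard_le_two (Set.mem_insert _ _) hSx
  have hSc : Subtype.val '' Sᶜ = ({x, y}ᶜ : Set V) := by
    rw [Set.image_val_compl, ← hy, Set.insert_eq x, Set.compl_union, Set.sdiff_eq]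
  rw [(G.induceInduceIso _ Sᶜ).connected_iff, hSc]
  refine connected_induce_compl_of_forall_not_isFragment ?_ (h y)
  apply Set.nonempty_of_ncard_ne_zero
  have := Set.ncard_add_ncard_compl {x, y}
  have := Set.ncard_insert_le x {y}
  simp only [Set.ncard_singleton] at *
  omega

end SimpleGraph

theorem minimal_two_cut_component_general {V : Type*} [Fintype V] (G : SimpleGraph V)
    (h2 : KConnected 2 G)
    (hdeg : ∀ w : V, 3 ≤ (G.neighborSet w).ncard)
    (u v : V) (hcut : ¬ (G.induce ({u, v}ᶜ : Set V)).Connected)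
    (C : (G.induce ({u, v}ᶜ : Set V)).ConnectedComponent)
    (hmin : ∀ u' v' : V, u' ≠ v' → ¬ (G.induce ({u', v'}ᶜ : Set V)).Connected →
      ∀ C' : (G.induce ({u', v'}ᶜ : Set V)).ConnectedComponent,
        C.supp.ncard ≤ C'.supp.ncard) :
    2 ≤ C.supp.ncard ∧
    ∀ x : ({u, v}ᶜ : Set V), x ∈ C.supp →
      KConnected 2 (G.induce ({(x : V)}ᶜ : Set V)) := by
  have h2conn : ∀ X F : Set V, X.ncard ≤ 1 → ¬ G.IsFragment X F :=
    fun X _ hX hF => hF.not_connected (h2.2 X (by omega))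
  have hCmin : ∀ X F : Set V, X.ncard ≤ 2 → G.IsFragment X F →
      (Subtype.val '' C.supp).ncard ≤ F.ncard := by
    intro X F hX hF
    obtain ⟨a, b, hab, rfl⟩ : ∃ a b, a ≠ b ∧ X = {a, b} :=
      Set.ncard_eq_two.mp (by by_contra h; exact h2conn X F (by omega) hF)
    obtain ⟨C', hC'⟩ := hF.exists_ncard_supp_le
    rw [Set.ncard_image_of_injective _ Subtype.val_injective]
    exact (hmin a b hab hF.not_connected C').trans hC'
  have hC := isFragment_image_supp hcut C
  have hC2 : 2 ≤ (Subtype.val '' C.supp).ncard :=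
    hC.two_le_ncard fun w =>
      (Set.ncard_insert_le u {v}).trans_lt (by rw [Set.ncard_singleton]; exact hdeg w)
  have hV : 4 ≤ Nat.card V := by
    have := G.ncard_neighborSet_lt_card u
    have := hdeg u
    omega
  refine ⟨Set.ncard_image_of_injective _ Subtype.val_injective ▸ hC2, fun x hx => ?_⟩
  exact kConnected_two_induce_compl_singleton hV
    fun y D => hC.not_isFragment_pair_of_mem h2conn hCmin hC2 ⟨x, hx, rfl⟩ y

theorem minimal_two_cut_component {V : Type*} [Fintype V] (G : SimpleGraph V)
    (h2 : KConnected 2 G) (h3 : ¬ KConnected 3 G)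
    (hdeg : ∀ w : V, 3 ≤ (G.neighborSet w).ncard)
    (u v : V) (huv : u ≠ v) (hcut : ¬ (G.induce ({u, v}ᶜ : Set V)).Connected)
    (C : (G.induce ({u, v}ᶜ : Set V)).ConnectedComponent)
    (hmin : ∀ u' v' : V, u' ≠ v' → ¬ (G.induce ({u', v'}ᶜ : Set V)).Connected →
      ∀ C' : (G.induce ({u', v'}ᶜ : Set V)).ConnectedComponent,
        C.supp.ncard ≤ C'.supp.ncard) :
    2 ≤ C.supp.ncard ∧
    ∀ x : ({u, v}ᶜ : Set V), x ∈ C.supp →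
      KConnected 2 (G.induce ({(x : V)}ᶜ : Set V)) :=
  minimal_two_cut_component_general G h2 hdeg u v hcut C hmin
end
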